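/- arXiv:1905.11712 — 9 statements merged into one kernel-verified Lean document; each statement's English description precedes it below -/
import Mathlib

section
/- Let γ > 0, β > 0, d > 0, and let g, φ, P : [0,∞) → ℝ be continuous functions. Suppose v, μ, ρ : [0,∞) → ℝ are differentiable with v(t) > 0 for all t ≥ 0 and satisfy, for all t > 0, the ODE system v'(t) = 2(γ − β v(t)²), μ'(t) = (2γ/v(t))(φ(t) − μ(t)), ρ'(t) = (γ g(t) − γ/v(t) − γ(μ(t) − φ(t))² − d P(t)) ρ(t). Then the function n(x,t) := ρ(t) √(v(t)/(2π)) exp(−(v(t)/2)(x − μ(t))²) satisfies, for all x ∈ ℝ and t > 0, the non-local parabolic equation ∂n/∂t(x,t) = β ∂²n/∂x²(x,t) + (γ g(t) − γ(x − φ(t))² − d P(t)) n(x,t). -/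
open Filter Topology

private lemma gauss_fst (A a b : ℝ) (y : ℝ) :
    HasDerivAt (fun y => A * Real.exp (-(a / 2) * (y - b) ^ 2))
      (A * (Real.exp (-(a / 2) * (y - b) ^ 2) * (-a * (y - b)))) y := by
  have h0 : HasDerivAt (fun y : ℝ => -(a / 2) * (y - b) ^ 2) (-a * (y - b)) y := by
    have h1 : HasDerivAt (fun y : ℝ => y - b) 1 y := (hasDerivAt_id y).sub_const b
    have h2 := (h1.pow 2).const_mul (-(a / 2))
    refine h2.congr_deriv ?_; ring
  exact h0.exp.const_mul A

private lemma gauss_snd (A a b x : ℝ) :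
    HasDerivAt (fun y => A * (Real.exp (-(a / 2) * (y - b) ^ 2) * (-a * (y - b))))
      (A * Real.exp (-(a / 2) * (x - b) ^ 2) * (a ^ 2 * (x - b) ^ 2 - a)) x := by
  have h0 : HasDerivAt (fun y : ℝ => -(a / 2) * (y - b) ^ 2) (-a * (x - b)) x := by
    have h1 : HasDerivAt (fun y : ℝ => y - b) 1 x := (hasDerivAt_id x).sub_const b
    have h2 := (h1.pow 2).const_mul (-(a / 2))
    refine h2.congr_deriv ?_; ring
  have hlin : HasDerivAt (fun y : ℝ => -a * (y - b)) (-a) x := by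
    have := ((hasDerivAt_id x).sub_const b).const_mul (-a)
    simpa using this
  have := (h0.exp.mul hlin).const_mul A
  refine this.congr_deriv ?_; ring

/-- Proposition 1 (verification step): a Gaussian ansatz whose size `ρ`, mean `μ` and
inverse variance `v` solve the stated ODE system gives an exact solution of the
non-local parabolic PDE `∂n/∂t = β ∂²n/∂x² + (γ g(t) − γ(x − φ(t))² − d P(t)) n`. -/
theorem stmt_0 (γ β d : ℝ) (hγ : 0 < γ) (hβ : 0 < β) (hd : 0 < d)
    (g φ P v μ ρ : ℝ → ℝ)
    (hg : Continuous g) (hφc : Continuous φ) (hP : Continuous P)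
    (hv_diff : DifferentiableOn ℝ v (Set.Ici 0))
    (hμ_diff : DifferentiableOn ℝ μ (Set.Ici 0))
    (hρ_diff : DifferentiableOn ℝ ρ (Set.Ici 0))
    (hv_pos : ∀ t, 0 ≤ t → 0 < v t)
    (hv : ∀ t, 0 < t → HasDerivAt v (2 * (γ - β * (v t) ^ 2)) t)
    (hμ : ∀ t, 0 < t → HasDerivAt μ ((2 * γ / v t) * (φ t - μ t)) t)
    (hρ : ∀ t, 0 < t →
      HasDerivAt ρ ((γ * g t - γ / v t - γ * (μ t - φ t) ^ 2 - d * P t) * ρ t) t)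
    (n : ℝ → ℝ → ℝ)
    (hn : ∀ x t, n x t =
      ρ t * Real.sqrt (v t / (2 * Real.pi)) * Real.exp (-(v t / 2) * (x - μ t) ^ 2)) :
    ∀ x : ℝ, ∀ t, 0 < t →
      deriv (fun s => n x s) t =
        β * deriv (deriv fun y => n y t) x +
          (γ * g t - γ * (x - φ t) ^ 2 - d * P t) * n x t := by
  intro x t ht
  have hvt : 0 < v t := hv_pos t ht.le
  have hπ : (0:ℝ) < Real.pi := Real.pi_pos
  set c : ℝ := Real.sqrt (v t / (2 * Real.pi)) with hc
  have hcpos : 0 < c := Real.sqrt_pos.2 (by positivity)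
  have hc2 : c * c = v t / (2 * Real.pi) := Real.mul_self_sqrt (by positivity)
  set E : ℝ := Real.exp (-(v t / 2) * (x - μ t) ^ 2) with hE
  have hEpos : 0 < E := Real.exp_pos _
  -- spatial derivatives
  have hfun : (fun y => n y t)
      = fun y => (ρ t * c) * Real.exp (-(v t / 2) * (y - μ t) ^ 2) := by
    funext y; rw [hn]
  have hd1 : (deriv fun y => n y t)
      = fun y => (ρ t * c) * (Real.exp (-(v t / 2) * (y - μ t) ^ 2) * (-(v t) * (y - μ t))) := by
    funext y
    rw [hfun]
    exact (gauss_fst (ρ t * c) (v t) (μ t) y).deriv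
  have hspace : deriv (deriv fun y => n y t) x
      = (ρ t * c) * E * ((v t) ^ 2 * (x - μ t) ^ 2 - v t) := by
    rw [hd1]
    exact (gauss_snd (ρ t * c) (v t) (μ t) x).deriv
  -- time derivative
  set v' : ℝ := 2 * (γ - β * (v t) ^ 2) with hv'
  set μ' : ℝ := (2 * γ / v t) * (φ t - μ t) with hμ'
  set ρ' : ℝ := (γ * g t - γ / v t - γ * (μ t - φ t) ^ 2 - d * P t) * ρ t with hρ'
  have hsqrt : HasDerivAt (fun s => Real.sqrt (v s / (2 * Real.pi)))
      (v' / (2 * Real.pi) / (2 * c)) t := by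
    have h1 : HasDerivAt (fun s => v s / (2 * Real.pi)) (v' / (2 * Real.pi)) t :=
      (hv t ht).div_const _
    exact h1.sqrt (by positivity)
  have hw : HasDerivAt (fun s => -(v s / 2) * (x - μ s) ^ 2)
      (-(v' / 2) * (x - μ t) ^ 2 + -(v t / 2) * (2 * (x - μ t) ^ 1 * -μ')) t := by
    have h1 : HasDerivAt (fun s => -(v s / 2)) (-(v' / 2)) t := ((hv t ht).div_const 2).neg
    have h2 : HasDerivAt (fun s => (x - μ s) ^ 2) (2 * (x - μ t) ^ 1 * -μ') t :=
      ((hμ t ht).const_sub x).pow 2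
    exact h1.mul h2
  have htime : HasDerivAt (fun s => n x s)
      ((ρ' * c + ρ t * (v' / (2 * Real.pi) / (2 * c))) * E
        + (ρ t * c) * (E * (-(v' / 2) * (x - μ t) ^ 2 + -(v t / 2) * (2 * (x - μ t) ^ 1 * -μ')))) t := by
    have hfun2 : (fun s => n x s)
        = fun s => ρ s * Real.sqrt (v s / (2 * Real.pi)) * Real.exp (-(v s / 2) * (x - μ s) ^ 2) := by
      funext s; exact hn x s
    rw [hfun2]
    exact ((hρ t ht).mul hsqrt).mul hw.exp
  rw [htime.deriv, hspace, hn x t]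
  -- rewrite the sqrt-derivative term
  have hkey : v' / (2 * Real.pi) / (2 * c) = v' * c / (2 * v t) := by
    rw [div_eq_div_iff (by positivity) (by positivity)]
    linear_combination (-(2 * v')) * hc2
  rw [hkey, hρ', hμ', ← hc, ← hE]
  field_simp
  ring
end

section
/- Let γ > 0, β > 0 and v⁰ > 0, and let v : [0,∞) → ℝ be the solution of v'(t) = 2(γ − β v(t)²), v(0) = v⁰, with v(t) > 0 for all t ≥ 0. Then v(t) converges to √(γ/β) exponentially fast as t → ∞: there exists a constant C ≥ 0 such that |v(t) − √(γ/β)| ≤ C e^{−4√(γβ) t} for all t ≥ 0. -/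
open Filter Topology

/-- Exponential convergence of the inverse variance `v(t)` to the equilibrium
`√(γ/β)` at rate `4√(γβ)`. -/
theorem stmt_2 (γ β v0 : ℝ) (hγ : 0 < γ) (hβ : 0 < β) (hv0 : 0 < v0)
    (v : ℝ → ℝ) (hinit : v 0 = v0)
    (hpos : ∀ t, 0 ≤ t → 0 < v t)
    (hode : ∀ t, 0 ≤ t → HasDerivAt v (2 * (γ - β * (v t) ^ 2)) t) :
    ∃ C : ℝ, 0 ≤ C ∧ ∀ t, 0 ≤ t →
      |v t - Real.sqrt (γ / β)| ≤ C * Real.exp (-(4 * Real.sqrt (γ * β)) * t) := by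
  set s : ℝ := Real.sqrt (γ / β) with hs_def
  have hs : 0 < s := Real.sqrt_pos.2 (div_pos hγ hβ)
  have hsq : s ^ 2 = γ / β := Real.sq_sqrt (div_pos hγ hβ).le
  have hγs : γ = β * s ^ 2 := by
    rw [hsq]; field_simp
  have hk : Real.sqrt (γ * β) = β * s := by
    have h1 : γ * β = β ^ 2 * (γ / β) := by field_simp
    rw [h1, Real.sqrt_mul (sq_nonneg β), Real.sqrt_sq hβ.le]
  set k : ℝ := 4 * (β * s) with hk_def
  have hkpos : 0 < k := by positivity
  set u : ℝ → ℝ := fun t => (v t - s) / (v t + s) with hu_def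
  have hden : ∀ t, 0 ≤ t → 0 < v t + s := fun t ht => add_pos (hpos t ht) hs
  -- derivative of u
  have hdu : ∀ t, 0 ≤ t → HasDerivAt u (-k * u t) t := by
    intro t ht
    have h1 := (hode t ht).sub_const s
    have h2 := (hode t ht).add_const s
    have h3 := h1.div h2 (hden t ht).ne'
    convert h3 using 1
    · rfl
    · rfl
    · rfl
    have hne := (hden t ht).ne'
    rw [hu_def]
    field_simp
    rw [hγs]; ring
  -- u t * exp (k t) is constant
  have hconst : ∀ t, 0 ≤ t → u t = u 0 * Real.exp (-k * t) := by
    intro t ht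
    set h : ℝ → ℝ := fun t => u t * Real.exp (k * t) with hh_def
    have hdh : ∀ x, 0 ≤ x → HasDerivAt h 0 x := by
      intro x hx
      have he : HasDerivAt (fun y : ℝ => Real.exp (k * y)) (Real.exp (k * x) * k) x := by
        simpa using ((hasDerivAt_id x).const_mul k).exp
      have := (hdu x hx).mul he
      convert this using 1
      · rfl
      · rfl
      · rfl
      ring
    have hcont : ContinuousOn h (Set.Icc 0 t) := by
      intro x hx
      exact ((hdh x hx.1).continuousAt).continuousWithinAt
    have := constant_of_has_deriv_right_zero hcont
      (fun x hx => ((hdh x hx.1).hasDerivWithinAt)) t (Set.mem_Icc.2 ⟨ht, le_rfl⟩)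
    have h0 : h 0 = u 0 := by simp [hh_def]
    have ht' : h t = u t * Real.exp (k * t) := rfl
    have heq : u t * Real.exp (k * t) = u 0 := by rw [← ht', this, h0]
    have hexp : Real.exp (k * t) ≠ 0 := (Real.exp_pos _).ne'
    have : u t = u 0 / Real.exp (k * t) := by
      field_simp at heq ⊢; linarith [heq]
    rw [this, neg_mul, Real.exp_neg, div_eq_mul_inv]
  -- |u 0| < 1
  have hu0 : |u 0| < 1 := by
    rw [hu_def]
    simp only [hinit]
    rw [abs_div, abs_of_pos (add_pos hv0 hs), div_lt_one (add_pos hv0 hs)]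
    rw [abs_lt]; constructor <;> linarith
  have h1upos : (0:ℝ) < 1 - |u 0| := by linarith
  refine ⟨|u 0| * (2 * s) / (1 - |u 0|),
    div_nonneg (by positivity) h1upos.le, ?_⟩
  intro t ht
  have hut : u t = u 0 * Real.exp (-k * t) := hconst t ht
  have hexple : Real.exp (-k * t) ≤ 1 := by
    apply Real.exp_le_one_iff.2
    nlinarith [hkpos]
  have hutle : |u t| ≤ |u 0| := by
    rw [hut, abs_mul, abs_of_pos (Real.exp_pos _)]
    nlinarith [abs_nonneg (u 0), Real.exp_pos (-k * t)]
  have h1u : 1 - |u 0| ≤ 1 - u t := by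
    have : u t ≤ |u t| := le_abs_self _
    linarith
  have h1utpos : 0 < 1 - u t := lt_of_lt_of_le h1upos h1u
  -- v t + s = 2 s / (1 - u t)
  have hne := (hden t ht).ne'
  have hvplus : (1 - u t) * (v t + s) = 2 * s := by
    simp only [hu_def]
    field_simp
    ring
  have hvle' : (v t + s) * (1 - |u 0|) ≤ 2 * s := by
    nlinarith [hden t ht]
  have hvs : v t - s = u t * (v t + s) := by
    simp only [hu_def]
    rw [div_mul_cancel₀ _ hne]
  have hgoal : |v t - s| ≤ |u 0| * (2 * s) / (1 - |u 0|) * Real.exp (-k * t) := by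
    have key : |u 0| * Real.exp (-k * t) * ((v t + s) * (1 - |u 0|)) ≤
        |u 0| * Real.exp (-k * t) * (2 * s) :=
      mul_le_mul_of_nonneg_left hvle' (by positivity)
    rw [hvs, abs_mul, abs_of_pos (hden t ht), hut, abs_mul,
      abs_of_pos (Real.exp_pos _), div_mul_eq_mul_div, le_div_iff₀ h1upos]
    nlinarith [key]
  have hrate : -(4 * Real.sqrt (γ * β)) * t = -k * t := by
    rw [hk, hk_def]
  rw [hrate]
  exact hgoal
end

section
/- Let γ > 0, d > 0, β_H > β_L > 0, ḡ > 0, φ̄ ∈ ℝ. For i ∈ {H, L}, let (v_i, μ_i, ρ_i) : [0,∞) → ℝ³ be differentiable functions with v_i(t) > 0 for all t ≥ 0, v_i(0) > 0, ρ_i(0) > 0, satisfying v_i' = 2(γ − β_i v_i²), μ_i' = (2γ/v_i)(φ̄ − μ_i), ρ_i' = (F_i(t) − d(ρ_H(t) + ρ_L(t))) ρ_i, where F_i(t) = γ ḡ − γ/v_i(t) − γ(μ_i(t) − φ̄)². If √(β_L) ≥ √γ · ḡ, then ρ_H(t) → 0 and ρ_L(t) → 0 as t → ∞. -/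
set_option maxHeartbeats 1000000

open Filter Topology Set

private lemma ev_le_aux (f f' : ℝ → ℝ) (T₀ b c : ℝ) (hc : 0 < c)
    (hf : ∀ t, T₀ ≤ t → HasDerivAt f (f' t) t)
    (hd : ∀ t, T₀ ≤ t → b ≤ f t → f' t ≤ -c) :
    ∀ᶠ t in Filter.atTop, f t ≤ b := by
  have step1 : ∃ t₁, T₀ ≤ t₁ ∧ f t₁ ≤ b := by
    by_contra h
    push_neg at h
    have hanti : AntitoneOn (fun t => f t + c * t) (Ici T₀) := by
      apply antitoneOn_of_deriv_nonpos (convex_Ici T₀)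
      · intro x hx
        exact (((hf x hx).add (((hasDerivAt_id x).const_mul c))).continuousAt).continuousWithinAt
      · intro x hx
        rw [interior_Ici] at hx
        exact (((hf x (le_of_lt hx)).add (((hasDerivAt_id x).const_mul c))).differentiableAt).differentiableWithinAt
      · intro x hx
        rw [interior_Ici] at hx
        have hx' : T₀ ≤ x := le_of_lt hx
        have hder : HasDerivAt (fun t => f t + c * t) (f' x + c * 1) x :=
          (hf x hx').add ((hasDerivAt_id x).const_mul c)
        rw [hder.deriv]
        have := hd x hx' (le_of_lt (h x hx'))
        linarith
    set t : ℝ := max T₀ ((f T₀ + c * T₀ - b) / c + 1) with ht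
    have h1 : T₀ ≤ t := le_max_left _ _
    have h2 : (f T₀ + c * T₀ - b) / c + 1 ≤ t := le_max_right _ _
    have h3 := hanti (self_mem_Ici) (mem_Ici.mpr h1) h1
    have hb := h t h1
    have h2a : (f T₀ + c * T₀ - b) / c ≤ t - 1 := by linarith
    have h2' : f T₀ + c * T₀ - b ≤ (t - 1) * c := (div_le_iff₀ hc).mp h2a
    simp only at h3
    nlinarith
  obtain ⟨t₁, ht₁, hft₁⟩ := step1
  rw [eventually_atTop]
  refine ⟨t₁, fun t₂ ht₂ => ?_⟩
  by_contra hb2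
  push_neg at hb2
  have ht₁₂ : t₁ < t₂ := by
    rcases eq_or_lt_of_le ht₂ with h | h
    · exact absurd hb2 (by rw [← h]; exact not_lt.mpr hft₁)
    · exact h
  set S : Set ℝ := {u | u ∈ Icc t₁ t₂ ∧ f u ≤ b} with hS
  have hcont : ContinuousOn f (Icc t₁ t₂) := fun x hx =>
    ((hf x (le_trans ht₁ hx.1)).continuousAt).continuousWithinAt
  have hSclosed : IsClosed S := by
    have : S = Icc t₁ t₂ ∩ f ⁻¹' (Iic b) := by
      ext u
      simp only [hS, Set.mem_setOf_eq, Set.mem_inter_iff, Set.mem_preimage, Set.mem_Iic]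
    rw [this]
    exact hcont.preimage_isClosed_of_isClosed isClosed_Icc isClosed_Iic
  have hne : S.Nonempty := ⟨t₁, ⟨⟨le_refl _, le_of_lt ht₁₂⟩, hft₁⟩⟩
  have hbdd : BddAbove S := ⟨t₂, fun u hu => hu.1.2⟩
  set s := sSup S with hs
  have hsS : s ∈ S := hSclosed.csSup_mem hne hbdd
  have hfs : f s ≤ b := hsS.2
  have hst₁ : t₁ ≤ s := hsS.1.1
  have hst₂ : s ≤ t₂ := hsS.1.2
  have hanti : AntitoneOn f (Icc s t₂) := by
    apply antitoneOn_of_deriv_nonpos (convex_Icc s t₂)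
    · exact fun x hx => ((hf x (le_trans ht₁ (le_trans hst₁ hx.1))).continuousAt).continuousWithinAt
    · intro x hx
      rw [interior_Icc] at hx
      exact ((hf x (le_trans ht₁ (le_trans hst₁ (le_of_lt hx.1)))).differentiableAt).differentiableWithinAt
    · intro x hx
      rw [interior_Icc] at hx
      have hxT : T₀ ≤ x := le_trans ht₁ (le_trans hst₁ (le_of_lt hx.1))
      have hfx : b ≤ f x := by
        by_contra hfx
        push_neg at hfx
        have hxS : x ∈ S := ⟨⟨le_trans hst₁ (le_of_lt hx.1), le_of_lt hx.2⟩, le_of_lt hfx⟩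
        exact absurd (le_csSup hbdd hxS) (not_le.mpr hx.1)
      rw [(hf x hxT).deriv]
      linarith [hd x hxT hfx]
  have := hanti (left_mem_Icc.mpr hst₂) (right_mem_Icc.mpr hst₂) hst₂
  linarith

private lemma pos_of_ode (f a : ℝ → ℝ) (hf0 : 0 < f 0)
    (hf : ∀ t, 0 ≤ t → HasDerivAt f (a t * f t) t)
    (ha : ∀ t, 0 ≤ t → ContinuousAt a t) :
    ∀ t, 0 ≤ t → 0 < f t := by
  intro t₀ ht₀
  by_contra hle
  push_neg at hle
  have ht₀pos : 0 < t₀ := by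
    rcases eq_or_lt_of_le ht₀ with h | h
    · exact absurd hle (by rw [← h]; exact not_le.mpr hf0)
    · exact h
  set S : Set ℝ := {u | u ∈ Icc (0:ℝ) t₀ ∧ f u ≤ 0} with hS
  have hcont : ContinuousOn f (Icc (0:ℝ) t₀) := fun x hx =>
    ((hf x hx.1).continuousAt).continuousWithinAt
  have hSclosed : IsClosed S := by
    have : S = Icc (0:ℝ) t₀ ∩ f ⁻¹' (Iic 0) := by
      ext u
      simp only [hS, Set.mem_setOf_eq, Set.mem_inter_iff, Set.mem_preimage, Set.mem_Iic]
    rw [this]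
    exact hcont.preimage_isClosed_of_isClosed isClosed_Icc isClosed_Iic
  have hne : S.Nonempty := ⟨t₀, ⟨⟨ht₀, le_refl _⟩, hle⟩⟩
  have hbdd : BddBelow S := ⟨0, fun u hu => hu.1.1⟩
  set T := sInf S with hT
  have hTS : T ∈ S := hSclosed.csInf_mem hne hbdd
  have hT0 : 0 ≤ T := hTS.1.1
  have hTle : T ≤ t₀ := hTS.1.2
  have hfT : f T ≤ 0 := hTS.2
  obtain ⟨L, hL⟩ := IsCompact.exists_bound_of_continuousOn isCompact_Icc
    (fun x hx => ((ha x hx.1).continuousWithinAt) : ContinuousOn a (Icc (0:ℝ) T))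
  have hmono : MonotoneOn (fun u => f u * Real.exp (L * u)) (Icc (0:ℝ) T) := by
    apply monotoneOn_of_deriv_nonneg (convex_Icc 0 T)
    · intro x hx
      exact (((hf x hx.1).mul (((hasDerivAt_id x).const_mul L).exp)).continuousAt).continuousWithinAt
    · intro x hx
      rw [interior_Icc] at hx
      exact (((hf x (le_of_lt hx.1)).mul (((hasDerivAt_id x).const_mul L).exp)).differentiableAt).differentiableWithinAt
    · intro x hx
      rw [interior_Icc] at hx
      have hx0 : (0:ℝ) ≤ x := le_of_lt hx.1
      have hder : HasDerivAt (fun u => f u * Real.exp (L * u))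
          (a x * f x * Real.exp (L * x) + f x * (Real.exp (L * x) * (L * 1))) x :=
        (hf x hx0).mul (((hasDerivAt_id x).const_mul L).exp)
      rw [hder.deriv]
      have hfxpos : 0 < f x := by
        by_contra hfx
        push_neg at hfx
        have hxS : x ∈ S := ⟨⟨hx0, le_trans (le_of_lt hx.2) hTle⟩, hfx⟩
        exact absurd (csInf_le hbdd hxS) (not_le.mpr hx.2)
      have haL : |a x| ≤ L := by
        have := hL x ⟨hx0, le_of_lt hx.2⟩
        rwa [Real.norm_eq_abs] at this
      have h1 : -L ≤ a x := neg_le_of_abs_le haL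
      have h2 : (0:ℝ) < Real.exp (L * x) := Real.exp_pos _
      nlinarith [mul_nonneg (mul_nonneg (show (0:ℝ) ≤ a x + L by linarith) hfxpos.le) h2.le]
  have := hmono (left_mem_Icc.mpr hT0) (right_mem_Icc.mpr hT0) hT0
  simp only [mul_zero, Real.exp_zero, mul_one] at this
  nlinarith [Real.exp_pos (L * T), hfT]

/-- Theorem 1 (i) at the level of the reduced ODE system: in a constant
environment, if `√(β_L) ≥ √γ · ḡ` (with `β_H > β_L`), then both populations go
extinct. -/
theorem stmt_6 (γ d βH βL gb φb : ℝ)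
    (hγ : 0 < γ) (hd : 0 < d) (hβL : 0 < βL) (hβ : βL < βH) (hgb : 0 < gb)
    (vH μH ρH vL μL ρL : ℝ → ℝ)
    (hvHpos : ∀ t, 0 ≤ t → 0 < vH t) (hvLpos : ∀ t, 0 ≤ t → 0 < vL t)
    (hρH0 : 0 < ρH 0) (hρL0 : 0 < ρL 0)
    (hvH : ∀ t, 0 ≤ t → HasDerivAt vH (2 * (γ - βH * (vH t) ^ 2)) t)
    (hvL : ∀ t, 0 ≤ t → HasDerivAt vL (2 * (γ - βL * (vL t) ^ 2)) t)
    (hμH : ∀ t, 0 ≤ t → HasDerivAt μH ((2 * γ / vH t) * (φb - μH t)) t)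
    (hμL : ∀ t, 0 ≤ t → HasDerivAt μL ((2 * γ / vL t) * (φb - μL t)) t)
    (hρH : ∀ t, 0 ≤ t → HasDerivAt ρH
      ((γ * gb - γ / vH t - γ * (μH t - φb) ^ 2 - d * (ρH t + ρL t)) * ρH t) t)
    (hρL : ∀ t, 0 ≤ t → HasDerivAt ρL
      ((γ * gb - γ / vL t - γ * (μL t - φb) ^ 2 - d * (ρH t + ρL t)) * ρL t) t)
    (hcond : Real.sqrt γ * gb ≤ Real.sqrt βL) :
    Tendsto ρH atTop (nhds 0) ∧ Tendsto ρL atTop (nhds 0) := by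
  have hβH : 0 < βH := lt_trans hβL hβ
  -- positivity of the populations
  have hρHpos : ∀ t, 0 ≤ t → 0 < ρH t := by
    apply pos_of_ode ρH
      (fun u => γ * gb - γ / vH u - γ * (μH u - φb) ^ 2 - d * (ρH u + ρL u)) hρH0 hρH
    intro t ht
    exact ((continuousAt_const.sub
        (continuousAt_const.div (hvH t ht).continuousAt (ne_of_gt (hvHpos t ht)))).sub
        (continuousAt_const.mul (((hμH t ht).continuousAt.sub continuousAt_const).pow 2))).sub
        (continuousAt_const.mul ((hρH t ht).continuousAt.add (hρL t ht).continuousAt))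
  have hρLpos : ∀ t, 0 ≤ t → 0 < ρL t := by
    apply pos_of_ode ρL
      (fun u => γ * gb - γ / vL u - γ * (μL u - φb) ^ 2 - d * (ρH u + ρL u)) hρL0 hρL
    intro t ht
    exact ((continuousAt_const.sub
        (continuousAt_const.div (hvL t ht).continuousAt (ne_of_gt (hvLpos t ht)))).sub
        (continuousAt_const.mul (((hμL t ht).continuousAt.sub continuousAt_const).pow 2))).sub
        (continuousAt_const.mul ((hρH t ht).continuousAt.add (hρL t ht).continuousAt))
  -- square root facts
  have hsγ : 0 < Real.sqrt γ := Real.sqrt_pos.mpr hγ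
  have hsγ2 : Real.sqrt γ * Real.sqrt γ = γ := Real.mul_self_sqrt hγ.le
  have hsβL : 0 < Real.sqrt βL := Real.sqrt_pos.mpr hβL
  have hsβH : 0 < Real.sqrt βH := Real.sqrt_pos.mpr hβH
  set vLs := Real.sqrt (γ / βL) with hvLsdef
  set vHs := Real.sqrt (γ / βH) with hvHsdef
  have hvLs_pos : 0 < vLs := Real.sqrt_pos.mpr (div_pos hγ hβL)
  have hvHs_pos : 0 < vHs := Real.sqrt_pos.mpr (div_pos hγ hβH)
  have hvLs_eq : vLs = Real.sqrt γ / Real.sqrt βL := by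
    rw [hvLsdef, Real.sqrt_div hγ.le]
  have hvHs_eq : vHs = Real.sqrt γ / Real.sqrt βH := by
    rw [hvHsdef, Real.sqrt_div hγ.le]
  have hqL_eq : γ / vLs = Real.sqrt γ * Real.sqrt βL := by
    rw [hvLs_eq]
    field_simp
    nlinarith
  have hqH_eq : γ / vHs = Real.sqrt γ * Real.sqrt βH := by
    rw [hvHs_eq]
    field_simp
    nlinarith
  have hqL : γ * gb ≤ γ / vLs := by
    rw [hqL_eq]
    calc γ * gb = Real.sqrt γ * (Real.sqrt γ * gb) := by linear_combination (-gb) * hsγ2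
      _ ≤ Real.sqrt γ * Real.sqrt βL := mul_le_mul_of_nonneg_left hcond hsγ.le
  have hqH : γ * gb < γ / vHs := by
    rw [hqH_eq]
    calc γ * gb = Real.sqrt γ * (Real.sqrt γ * gb) := by linear_combination (-gb) * hsγ2
      _ ≤ Real.sqrt γ * Real.sqrt βL := mul_le_mul_of_nonneg_left hcond hsγ.le
      _ < Real.sqrt γ * Real.sqrt βH :=
        (mul_lt_mul_iff_right₀ hsγ).mpr (Real.sqrt_lt_sqrt hβL.le hβ)
  -- eventual upper bounds for the variance-type variables
  have hvev : ∀ (β : ℝ) (v : ℝ → ℝ), 0 < β →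
      (∀ t, 0 ≤ t → HasDerivAt v (2 * (γ - β * (v t) ^ 2)) t) →
      ∀ b, Real.sqrt (γ / β) < b → ∀ᶠ t in atTop, v t ≤ b := by
    intro β v hβp hv b hb
    have hb0 : 0 < b := lt_of_le_of_lt (Real.sqrt_nonneg _) hb
    have hsq : γ / β < b ^ 2 := by
      nlinarith [Real.sq_sqrt (div_pos hγ hβp).le, Real.sqrt_nonneg (γ / β)]
    have hγb : γ < β * b ^ 2 := by
      rw [div_lt_iff₀ hβp] at hsq
      linarith
    have hcpos : 0 < 2 * (β * b ^ 2 - γ) := by linarith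
    apply ev_le_aux v (fun t => 2 * (γ - β * (v t) ^ 2)) 0 b _ hcpos hv
    intro t ht hbt
    have hsq2 : b ^ 2 ≤ (v t) ^ 2 := by nlinarith
    nlinarith
  -- generic tendsto-from-eventual-smallness
  have htend : ∀ ρ : ℝ → ℝ, (∀ t, 0 ≤ t → 0 < ρ t) →
      (∀ ε, 0 < ε → ∀ᶠ t in atTop, ρ t ≤ ε) → Tendsto ρ atTop (nhds 0) := by
    intro ρ hpos hev
    rw [Metric.tendsto_atTop]
    intro ε hε
    obtain ⟨N, hN⟩ := eventually_atTop.mp (hev (ε / 2) (by linarith))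
    refine ⟨max N 0, fun n hn => ?_⟩
    have h1 := hN n (le_trans (le_max_left _ _) hn)
    have h2 := hpos n (le_trans (le_max_right _ _) hn)
    rw [Real.dist_eq, sub_zero, abs_of_pos h2]
    linarith
  constructor
  · -- ρH → 0
    apply htend ρH hρHpos
    intro ε hε
    set q := γ / vHs with hq
    set r := (q + γ * gb) / 2 with hr
    have hqpos : 0 < q := div_pos hγ hvHs_pos
    have hgγ : 0 < γ * gb := mul_pos hγ hgb
    have hrpos : 0 < r := by rw [hr]; positivity
    have hrq : r < q := by rw [hr]; linarith
    have hrg : γ * gb < r := by rw [hr]; linarith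
    have hb : vHs < γ / r := by
      have hqv : γ / q = vHs := by
        rw [hq]
        field_simp
      rw [← hqv]
      exact (div_lt_div_iff_of_pos_left hγ hqpos hrpos).mpr hrq
    obtain ⟨T₁, hT₁⟩ := eventually_atTop.mp (hvev βH vH hβH hvH (γ / r) hb)
    set c₀ := r - γ * gb with hc₀def
    have hc₀ : 0 < c₀ := by rw [hc₀def]; linarith
    apply ev_le_aux ρH
      (fun t => (γ * gb - γ / vH t - γ * (μH t - φb) ^ 2 - d * (ρH t + ρL t)) * ρH t)
      (max T₁ 0) ε (c₀ * ε) (mul_pos hc₀ hε)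
      (fun t ht => hρH t (le_trans (le_max_right _ _) ht))
    intro t ht hεt
    have ht0 : 0 ≤ t := le_trans (le_max_right _ _) ht
    have hvHt := hT₁ t (le_trans (le_max_left _ _) ht)
    have hvpos := hvHpos t ht0
    have hfrac : r ≤ γ / vH t := by
      rw [le_div_iff₀ hvpos]
      have h1 : vH t * r ≤ (γ / r) * r := mul_le_mul_of_nonneg_right hvHt hrpos.le
      have h2 : (γ / r) * r = γ := div_mul_cancel₀ γ (ne_of_gt hrpos)
      nlinarith
    have hF : γ * gb - γ / vH t - γ * (μH t - φb) ^ 2 - d * (ρH t + ρL t) ≤ -c₀ := by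
      have h1 : 0 ≤ γ * (μH t - φb) ^ 2 := by positivity
      have h2 : 0 ≤ d * (ρH t + ρL t) := by
        have := hρHpos t ht0
        have := hρLpos t ht0
        positivity
      rw [hc₀def]
      linarith
    calc (γ * gb - γ / vH t - γ * (μH t - φb) ^ 2 - d * (ρH t + ρL t)) * ρH t
        ≤ (-c₀) * ρH t := mul_le_mul_of_nonneg_right hF (hρHpos t ht0).le
      _ ≤ (-c₀) * ε := mul_le_mul_of_nonpos_left hεt (by linarith)
      _ = -(c₀ * ε) := by ring
  · -- ρL → 0
    apply htend ρL hρLpos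
    intro ε hε
    set q := γ / vLs with hq
    have hqpos : 0 < q := div_pos hγ hvLs_pos
    set δ := min (d * ε / 2) (q / 2) with hδdef
    have hδpos : 0 < δ := lt_min (by positivity) (by positivity)
    have hδd : δ ≤ d * ε / 2 := min_le_left _ _
    set r := q - δ with hr
    have hrpos : 0 < r := by
      have : δ ≤ q / 2 := min_le_right _ _
      rw [hr]; linarith
    have hrq : r < q := by rw [hr]; linarith
    have hb : vLs < γ / r := by
      have hqv : γ / q = vLs := by
        rw [hq]
        field_simp
      rw [← hqv]
      exact (div_lt_div_iff_of_pos_left hγ hqpos hrpos).mpr hrq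
    obtain ⟨T₁, hT₁⟩ := eventually_atTop.mp (hvev βL vL hβL hvL (γ / r) hb)
    apply ev_le_aux ρL
      (fun t => (γ * gb - γ / vL t - γ * (μL t - φb) ^ 2 - d * (ρH t + ρL t)) * ρL t)
      (max T₁ 0) ε ((d * ε / 2) * ε) (by positivity)
      (fun t ht => hρL t (le_trans (le_max_right _ _) ht))
    intro t ht hεt
    have ht0 : 0 ≤ t := le_trans (le_max_right _ _) ht
    have hvLt := hT₁ t (le_trans (le_max_left _ _) ht)
    have hvpos := hvLpos t ht0
    have hfrac : r ≤ γ / vL t := by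
      rw [le_div_iff₀ hvpos]
      have h1 : vL t * r ≤ (γ / r) * r := mul_le_mul_of_nonneg_right hvLt hrpos.le
      have h2 : (γ / r) * r = γ := div_mul_cancel₀ γ (ne_of_gt hrpos)
      nlinarith
    have hF : γ * gb - γ / vL t - γ * (μL t - φb) ^ 2 - d * (ρH t + ρL t) ≤ -(d * ε / 2) := by
      have h1 : 0 ≤ γ * (μL t - φb) ^ 2 := by positivity
      have h2 : 0 ≤ d * ρH t := mul_nonneg hd.le (hρHpos t ht0).le
      have h3 : d * ε ≤ d * ρL t := mul_le_mul_of_nonneg_left hεt hd.le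
      have h4 : γ * gb - γ / vL t ≤ δ := by
        rw [hr] at hfrac
        linarith
      nlinarith
    calc (γ * gb - γ / vL t - γ * (μL t - φb) ^ 2 - d * (ρH t + ρL t)) * ρL t
        ≤ (-(d * ε / 2)) * ρL t := mul_le_mul_of_nonneg_right hF (hρLpos t ht0).le
      _ ≤ (-(d * ε / 2)) * ε := mul_le_mul_of_nonpos_left hεt (by nlinarith)
      _ = -((d * ε / 2) * ε) := by ring
end

section
/- Let γ > 0, d > 0, β_H > β_L > 0, ḡ > 0, φ̄ ∈ ℝ. For i ∈ {H, L}, let (v_i, μ_i, ρ_i) : [0,∞) → ℝ³ be differentiable functions with v_i(t) > 0 for all t ≥ 0, v_i(0) > 0, ρ_i(0) > 0, satisfying v_i' = 2(γ − β_i v_i²), μ_i' = (2γ/v_i)(φ̄ − μ_i), ρ_i' = (F_i(t) − d(ρ_H(t) + ρ_L(t))) ρ_i, where F_i(t) = γ ḡ − γ/v_i(t) − γ(μ_i(t) − φ̄)². If √(β_L) < √γ · ḡ, then ρ_H(t) → 0 as t → ∞; moreover ρ_L(t)/ρ_H(t) → ∞ as t → ∞. -/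
open Filter Topology

section CompetitiveExclusionHelpers
open Set

/-- Core barrier lemma: if `f` starts at or below `M` and has negative derivative
whenever it is above `M`, it stays at or below `M`. -/
lemma barrier_le {f f' : ℝ → ℝ} {t₀ M : ℝ}
    (hder : ∀ t, t₀ ≤ t → HasDerivAt f (f' t) t)
    (hneg : ∀ t, t₀ ≤ t → M < f t → f' t < 0)
    (h0 : f t₀ ≤ M) : ∀ t, t₀ ≤ t → f t ≤ M := by
  intro t₁ ht₁
  by_contra hgt
  push_neg at hgt
  have hcont : ContinuousOn f (Icc t₀ t₁) := fun u hu =>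
    ((hder u hu.1).continuousAt).continuousWithinAt
  set S : Set ℝ := Icc t₀ t₁ ∩ f ⁻¹' (Iic M) with hS
  have hSclosed : IsClosed S := hcont.preimage_isClosed_of_isClosed isClosed_Icc isClosed_Iic
  have hSne : S.Nonempty := ⟨t₀, ⟨le_refl _, ht₁⟩, h0⟩
  have hSbdd : BddAbove S := ⟨t₁, fun u hu => hu.1.2⟩
  set s := sSup S with hs
  have hsmem : s ∈ S := hSclosed.csSup_mem hSne hSbdd
  have hst₀ : t₀ ≤ s := hsmem.1.1
  have hst₁ : s ≤ t₁ := hsmem.1.2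
  have hfs : f s ≤ M := hsmem.2
  have hslt : s < t₁ := lt_of_le_of_ne hst₁ (fun h => by rw [h] at hfs; linarith)
  have hgtS : ∀ u, s < u → u ≤ t₁ → M < f u := by
    intro u hsu hut₁
    by_contra h
    push_neg at h
    exact absurd (le_csSup hSbdd (⟨⟨hst₀.trans hsu.le, hut₁⟩, h⟩ : u ∈ S)) (not_le.2 hsu)
  have hanti : StrictAntiOn f (Icc s t₁) := by
    apply strictAntiOn_of_deriv_neg (convex_Icc s t₁)
      (hcont.mono (Icc_subset_Icc hst₀ le_rfl))
    intro x hx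
    rw [interior_Icc] at hx
    have hxt₀ : t₀ ≤ x := hst₀.trans hx.1.le
    rw [(hder x hxt₀).deriv]
    exact hneg x hxt₀ (hgtS x hx.1 hx.2.le)
  have := hanti (left_mem_Icc.2 hst₁) (right_mem_Icc.2 hst₁) hslt
  linarith

/-- If `f` has derivative at most `-c < 0` whenever it is at or above `M`,
then eventually `f ≤ M`. -/
lemma eventually_le_of_deriv {f f' : ℝ → ℝ} {M c : ℝ} (hc : 0 < c)
    (hder : ∀ t, (0:ℝ) ≤ t → HasDerivAt f (f' t) t)
    (hneg : ∀ t, (0:ℝ) ≤ t → M ≤ f t → f' t ≤ -c) :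
    ∀ᶠ t in atTop, f t ≤ M := by
  -- Step 1: there is some t₀ ≥ 0 with f t₀ < M
  have step1 : ∃ t₀, 0 ≤ t₀ ∧ f t₀ < M := by
    by_contra h
    push_neg at h
    -- f ≥ M always, so f' ≤ -c always, so f decreases linearly
    have hgd : ∀ x, (0:ℝ) ≤ x → HasDerivAt (fun t => f t + c * t) (f' x + c * 1) x :=
      fun x hx => (hder x hx).add ((hasDerivAt_id x).const_mul c)
    have hmono : AntitoneOn (fun t => f t + c * t) (Ici (0:ℝ)) := by
      apply antitoneOn_of_deriv_nonpos (convex_Ici 0)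
      · exact fun u hu => ((hgd u hu).continuousAt).continuousWithinAt
      · intro x hx
        rw [interior_Ici] at hx
        exact ((hgd x hx.le).differentiableAt).differentiableWithinAt
      · intro x hx
        rw [interior_Ici] at hx
        rw [(hgd x hx.le).deriv]
        have := hneg x hx.le (h x hx.le)
        linarith
    have hTnn : 0 ≤ (f 0 - M) / c := div_nonneg (by linarith [h 0 le_rfl]) hc.le
    have hT0 : (0:ℝ) ≤ (f 0 - M) / c + 1 := by linarith
    have hkey := hmono (self_mem_Ici) (mem_Ici.2 hT0) hT0
    simp only at hkey
    have hfT : M ≤ f ((f 0 - M) / c + 1) := h _ hT0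
    have hcT : c * ((f 0 - M) / c + 1) = (f 0 - M) + c := by field_simp
    rw [hcT] at hkey
    linarith
  obtain ⟨t₀, ht₀, hft₀⟩ := step1
  -- Step 2: barrier from t₀ onwards
  have : ∀ t, t₀ ≤ t → f t ≤ M := by
    apply barrier_le (fun t ht => hder t (ht₀.trans ht))
    · intro t ht hMt
      have := hneg t (ht₀.trans ht) hMt.le
      linarith
    · exact hft₀.le
  filter_upwards [eventually_ge_atTop t₀] with t ht using this t ht

/-- Positivity for solutions of `f' = a · f` with continuous `a` and `f 0 > 0`. -/
lemma pos_of_linear_ode {f a : ℝ → ℝ}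
    (hder : ∀ t, (0:ℝ) ≤ t → HasDerivAt f (a t * f t) t)
    (hacont : ContinuousOn a (Ici (0:ℝ)))
    (h0 : 0 < f 0) : ∀ t, (0:ℝ) ≤ t → 0 < f t := by
  intro t₁ ht₁
  by_contra hle
  push_neg at hle
  have hcont : ContinuousOn f (Icc 0 t₁) := fun u hu =>
    ((hder u hu.1).continuousAt).continuousWithinAt
  set S : Set ℝ := Icc 0 t₁ ∩ f ⁻¹' (Iic 0) with hS
  have hSclosed : IsClosed S := hcont.preimage_isClosed_of_isClosed isClosed_Icc isClosed_Iic
  have hSne : S.Nonempty := ⟨t₁, ⟨ht₁, le_rfl⟩, hle⟩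
  have hSbdd : BddBelow S := ⟨0, fun u hu => hu.1.1⟩
  set s := sInf S with hs
  have hsmem : s ∈ S := hSclosed.csInf_mem hSne hSbdd
  have hs0 : 0 ≤ s := hsmem.1.1
  have hfs : f s ≤ 0 := hsmem.2
  have hspos : 0 < s := lt_of_le_of_ne hs0 (fun h => by rw [← h] at hfs; linarith)
  have hfpos : ∀ u, 0 ≤ u → u < s → 0 < f u := by
    intro u hu hus
    by_contra h
    push_neg at h
    exact absurd (csInf_le hSbdd (⟨⟨hu, hus.le.trans hsmem.1.2⟩, h⟩ : u ∈ S)) (not_le.2 hus)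
  -- bound for a on [0, s]
  obtain ⟨K, hK⟩ := (isCompact_Icc (a := (0:ℝ)) (b := s)).exists_bound_of_continuousOn
    (hacont.mono (Icc_subset_Ici_self))
  -- g = f * exp(K t) is monotone on [0, s]
  set g : ℝ → ℝ := fun u => f u * Real.exp (K * u) with hg
  have hgder : ∀ u, 0 ≤ u → HasDerivAt g ((a u + K) * f u * Real.exp (K * u)) u := by
    intro u hu
    have h1 : HasDerivAt (fun u => Real.exp (K * u)) (K * Real.exp (K * u)) u := by
      have := (Real.hasDerivAt_exp (K * u)).comp u ((hasDerivAt_id u).const_mul K)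
      exact this.congr_deriv (by ring)
    have := (hder u hu).mul h1
    exact this.congr_deriv (by ring)
  have hmono : MonotoneOn g (Icc 0 s) := by
    apply monotoneOn_of_deriv_nonneg (convex_Icc 0 s)
    · exact fun u hu => ((hgder u hu.1).continuousAt).continuousWithinAt
    · intro x hx
      rw [interior_Icc] at hx
      exact ((hgder x hx.1.le).differentiableAt).differentiableWithinAt
    · intro x hx
      rw [interior_Icc] at hx
      rw [(hgder x hx.1.le).deriv]
      have hfx : 0 < f x := hfpos x hx.1.le hx.2
      have haK : 0 ≤ a x + K := by
        have h1 := hK x ⟨hx.1.le, hx.2.le⟩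
        rw [Real.norm_eq_abs] at h1
        have h2 := abs_le.1 h1
        linarith [h2.1]
      positivity
  have h1 := hmono (left_mem_Icc.2 hspos.le) (right_mem_Icc.2 hspos.le) hspos.le
  simp only [hg, mul_zero, Real.exp_zero, mul_one] at h1
  nlinarith [Real.exp_pos (K * s), h0]

end CompetitiveExclusionHelpers

open Set in
set_option maxHeartbeats 1000000 in
/-- Theorem 1 (ii), competitive-exclusion part, at the level of the reduced ODE
system: if `√(β_L) < √γ · ḡ`, the population with the higher rate of phenotypic
variation is outcompeted: `ρ_H → 0` and `ρ_L/ρ_H → ∞`. -/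
theorem stmt_7 (γ d βH βL gb φb : ℝ)
    (hγ : 0 < γ) (hd : 0 < d) (hβL : 0 < βL) (hβ : βL < βH) (hgb : 0 < gb)
    (vH μH ρH vL μL ρL : ℝ → ℝ)
    (hvHpos : ∀ t, 0 ≤ t → 0 < vH t) (hvLpos : ∀ t, 0 ≤ t → 0 < vL t)
    (hρH0 : 0 < ρH 0) (hρL0 : 0 < ρL 0)
    (hvH : ∀ t, 0 ≤ t → HasDerivAt vH (2 * (γ - βH * (vH t) ^ 2)) t)
    (hvL : ∀ t, 0 ≤ t → HasDerivAt vL (2 * (γ - βL * (vL t) ^ 2)) t)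
    (hμH : ∀ t, 0 ≤ t → HasDerivAt μH ((2 * γ / vH t) * (φb - μH t)) t)
    (hμL : ∀ t, 0 ≤ t → HasDerivAt μL ((2 * γ / vL t) * (φb - μL t)) t)
    (hρH : ∀ t, 0 ≤ t → HasDerivAt ρH
      ((γ * gb - γ / vH t - γ * (μH t - φb) ^ 2 - d * (ρH t + ρL t)) * ρH t) t)
    (hρL : ∀ t, 0 ≤ t → HasDerivAt ρL
      ((γ * gb - γ / vL t - γ * (μL t - φb) ^ 2 - d * (ρH t + ρL t)) * ρL t) t)
    (hcond : Real.sqrt βL < Real.sqrt γ * gb) :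
    Tendsto ρH atTop (nhds 0) ∧ Tendsto (fun t => ρL t / ρH t) atTop atTop := by
  have hβH : 0 < βH := hβL.trans hβ
  -- equilibrium values
  set KH : ℝ := Real.sqrt (γ / βH) with hKHdef
  set KL : ℝ := Real.sqrt (γ / βL) with hKLdef
  have hKH : 0 < KH := Real.sqrt_pos.2 (div_pos hγ hβH)
  have hKL : 0 < KL := Real.sqrt_pos.2 (div_pos hγ hβL)
  have hKHsq : KH ^ 2 = γ / βH := Real.sq_sqrt (div_pos hγ hβH).le
  have hKLsq : KL ^ 2 = γ / βL := Real.sq_sqrt (div_pos hγ hβL).le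
  have hγKH : γ = βH * KH ^ 2 := by rw [hKHsq]; field_simp
  have hγKL : γ = βL * KL ^ 2 := by rw [hKLsq]; field_simp
  have hKHKL : KH < KL := by
    apply Real.sqrt_lt_sqrt (div_pos hγ hβH).le
    exact div_lt_div_of_pos_left hγ hβL hβ
  clear_value KH KL
  set D : ℝ := 1 / KH - 1 / KL with hDdef
  have hD : 0 < D := by
    have := one_div_lt_one_div_of_lt hKH hKHKL
    simp only [hDdef]; linarith
  clear_value D
  -- continuity of the basic functions on [0, ∞)
  have hvHc : ContinuousOn vH (Ici (0:ℝ)) := fun t ht => ((hvH t ht).continuousAt).continuousWithinAt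
  have hvLc : ContinuousOn vL (Ici (0:ℝ)) := fun t ht => ((hvL t ht).continuousAt).continuousWithinAt
  have hμHc : ContinuousOn μH (Ici (0:ℝ)) := fun t ht => ((hμH t ht).continuousAt).continuousWithinAt
  have hμLc : ContinuousOn μL (Ici (0:ℝ)) := fun t ht => ((hμL t ht).continuousAt).continuousWithinAt
  have hρHc : ContinuousOn ρH (Ici (0:ℝ)) := fun t ht => ((hρH t ht).continuousAt).continuousWithinAt
  have hρLc : ContinuousOn ρL (Ici (0:ℝ)) := fun t ht => ((hρL t ht).continuousAt).continuousWithinAt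
  have haHc : ContinuousOn (fun t => γ * gb - γ / vH t - γ * (μH t - φb) ^ 2 - d * (ρH t + ρL t))
      (Ici (0:ℝ)) := by
    refine ContinuousOn.sub (ContinuousOn.sub (ContinuousOn.sub continuousOn_const ?_) ?_) ?_
    · exact continuousOn_const.div hvHc (fun t ht => (hvHpos t ht).ne')
    · exact continuousOn_const.mul ((hμHc.sub continuousOn_const).pow 2)
    · exact continuousOn_const.mul (hρHc.add hρLc)
  have haLc : ContinuousOn (fun t => γ * gb - γ / vL t - γ * (μL t - φb) ^ 2 - d * (ρH t + ρL t))
      (Ici (0:ℝ)) := by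
    refine ContinuousOn.sub (ContinuousOn.sub (ContinuousOn.sub continuousOn_const ?_) ?_) ?_
    · exact continuousOn_const.div hvLc (fun t ht => (hvLpos t ht).ne')
    · exact continuousOn_const.mul ((hμLc.sub continuousOn_const).pow 2)
    · exact continuousOn_const.mul (hρHc.add hρLc)
  -- positivity of ρH, ρL
  have hρHpos : ∀ t, (0:ℝ) ≤ t → 0 < ρH t := pos_of_linear_ode hρH haHc hρH0
  have hρLpos : ∀ t, (0:ℝ) ≤ t → 0 < ρL t := pos_of_linear_ode hρL haLc hρL0
  -- uniform upper bound on vL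
  set MvL : ℝ := max (vL 0) KL with hMvLdef
  have hMvLpos : 0 < MvL := lt_of_lt_of_le hKL (le_max_right _ _)
  have hvLle : ∀ t, (0:ℝ) ≤ t → vL t ≤ MvL := by
    apply barrier_le (f' := fun t => 2 * (γ - βL * (vL t) ^ 2)) hvL
    · intro t ht hMt
      have h1 : KL < vL t := lt_of_le_of_lt (le_max_right _ _) hMt
      have h2 : KL ^ 2 < vL t ^ 2 := by
        apply pow_lt_pow_left₀ h1 hKL.le
        norm_num
      have h3 := mul_lt_mul_of_pos_left h2 hβL
      linarith [hγKL]
    · exact le_max_left _ _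
  -- μL convergence: (μL - φb)² eventually small
  have hwder : ∀ t, (0:ℝ) ≤ t →
      HasDerivAt (fun t => (μL t - φb) ^ 2)
        ((2:ℕ) * (μL t - φb) ^ 1 * ((2 * γ / vL t) * (φb - μL t))) t := by
    intro t ht
    exact ((hμL t ht).sub_const φb).pow 2
  have hμLev : ∀ ε : ℝ, 0 < ε → ∀ᶠ t in atTop, (μL t - φb) ^ 2 ≤ ε := by
    intro ε hε
    apply eventually_le_of_deriv (f := fun t => (μL t - φb) ^ 2)
      (f' := fun t => (2:ℕ) * (μL t - φb) ^ 1 * ((2 * γ / vL t) * (φb - μL t)))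
      (c := 4 * γ * ε / MvL) (by positivity) hwder
    intro t ht hMt
    have hvp := hvLpos t ht
    have hvle := hvLle t ht
    have key : (2:ℕ) * (μL t - φb) ^ 1 * ((2 * γ / vL t) * (φb - μL t))
        = -(4 * γ / vL t) * (μL t - φb) ^ 2 := by
      push_cast
      field_simp
      ring
    rw [key]
    have h1 : 4 * γ / MvL ≤ 4 * γ / vL t :=
      div_le_div_of_nonneg_left (by positivity) hvp hvle
    have h2 : (4 * γ / MvL) * ε ≤ (4 * γ / vL t) * ((μL t - φb) ^ 2) :=
      mul_le_mul h1 hMt hε.le (by positivity)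
    have h3 : (4 * γ / MvL) * ε = 4 * γ * ε / MvL := by ring
    linarith
  -- vH eventually ≤ KH + ε
  have hvHev : ∀ ε : ℝ, 0 < ε → ∀ᶠ t in atTop, vH t ≤ KH + ε := by
    intro ε hε
    apply eventually_le_of_deriv (f := vH) (f' := fun t => 2 * (γ - βH * (vH t) ^ 2))
      (c := 2 * βH * ((KH + ε) ^ 2 - KH ^ 2))
      (by nlinarith [mul_pos hβH (mul_pos hKH hε), mul_pos hβH (mul_pos hε hε)]) hvH
    intro t ht hMt
    have hsq : (KH + ε) ^ 2 ≤ vH t ^ 2 := pow_le_pow_left₀ (by positivity) hMt 2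
    have h2 := mul_le_mul_of_nonneg_left hsq hβH.le
    linarith [hγKH]
  -- vL eventually ≥ KL - ε  (for ε < KL)
  have hvLev : ∀ ε : ℝ, 0 < ε → ε < KL → ∀ᶠ t in atTop, KL - ε ≤ vL t := by
    intro ε hε hεKL
    have h := eventually_le_of_deriv (f := fun t => -vL t)
      (f' := fun t => -(2 * (γ - βL * (vL t) ^ 2))) (M := -(KL - ε))
      (c := 2 * βL * (KL ^ 2 - (KL - ε) ^ 2))
      (by
        have h1 : 0 < ε * (2 * KL - ε) := mul_pos hε (by linarith)
        nlinarith [mul_pos hβL h1])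
      (fun t ht => (hvL t ht).neg) ?_
    · filter_upwards [h] with t ht; linarith
    · intro t ht hMt
      have hMt' : -(KL - ε) ≤ -vL t := hMt
      have hvp := hvLpos t ht
      have hvle : vL t ≤ KL - ε := by linarith
      have hsq : vL t ^ 2 ≤ (KL - ε) ^ 2 := pow_le_pow_left₀ hvp.le hvle 2
      have h2 := mul_le_mul_of_nonneg_left hsq hβL.le
      show -(2 * (γ - βL * (vL t) ^ 2)) ≤ -(2 * βL * (KL ^ 2 - (KL - ε) ^ 2))
      linarith [hγKL]
  -- choice of ε
  obtain ⟨ε, hεpos, hεKL, hεineq⟩ :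
      ∃ ε : ℝ, 0 < ε ∧ ε < KL ∧ D / 2 < 1 / (KH + ε) - 1 / (KL - ε) - ε := by
    have hcontf : ContinuousAt (fun ε : ℝ => 1 / (KH + ε) - 1 / (KL - ε) - ε) 0 := by
      refine ContinuousAt.sub (ContinuousAt.sub ?_ ?_) continuousAt_id
      · exact continuousAt_const.div (continuousAt_const.add continuousAt_id) (by simpa using hKH.ne')
      · exact continuousAt_const.div (continuousAt_const.sub continuousAt_id) (by simpa using hKL.ne')
    have hval : D / 2 < 1 / (KH + 0) - 1 / (KL - 0) - 0 := by
      simp only [add_zero, sub_zero]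
      rw [← hDdef]
      linarith
    have hev1 : ∀ᶠ x in 𝓝 (0:ℝ), D / 2 < 1 / (KH + x) - 1 / (KL - x) - x :=
      hcontf.eventually (eventually_gt_nhds hval)
    have hev2 : ∀ᶠ x in 𝓝 (0:ℝ), x < KL := eventually_lt_nhds hKL
    obtain ⟨ε, hε1, hε2⟩ := (((hev1.and hev2).filter_mono nhdsWithin_le_nhds).and
      (eventually_mem_nhdsWithin (s := Ioi (0:ℝ)))).exists
    exact ⟨ε, hε2, hε1.2, hε1.1⟩
  set c0 : ℝ := γ * (D / 2) with hc0def
  have hc0 : 0 < c0 := by rw [hc0def]; positivity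
  clear_value c0
  -- the relative fitness b
  set b : ℝ → ℝ := fun t => γ / vH t - γ / vL t + γ * (μH t - φb) ^ 2 - γ * (μL t - φb) ^ 2
    with hbdef
  clear_value b
  have hbev : ∀ᶠ t in atTop, c0 ≤ b t := by
    filter_upwards [hvHev ε hεpos, hvLev ε hεpos hεKL, hμLev ε hεpos, eventually_ge_atTop (0:ℝ)]
      with t h1 h2 h3 ht
    have hvHp := hvHpos t ht
    have hvLp := hvLpos t ht
    have e1 : γ / (KH + ε) ≤ γ / vH t := div_le_div_of_nonneg_left hγ.le hvHp h1
    have e2 : γ / vL t ≤ γ / (KL - ε) := div_le_div_of_nonneg_left hγ.le (by linarith) h2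
    have e3 : 0 ≤ γ * (μH t - φb) ^ 2 := by positivity
    have e4 : γ * (μL t - φb) ^ 2 ≤ γ * ε := mul_le_mul_of_nonneg_left h3 hγ.le
    have e5 : γ * (D / 2) ≤ γ * (1 / (KH + ε) - 1 / (KL - ε) - ε) :=
      mul_le_mul_of_nonneg_left hεineq.le hγ.le
    have e6 : γ * (1 / (KH + ε) - 1 / (KL - ε) - ε)
        = γ / (KH + ε) - γ / (KL - ε) - γ * ε := by ring
    rw [e6] at e5
    simp only [hbdef, hc0def]
    linarith
  -- the ratio r and its logarithm
  set r : ℝ → ℝ := fun t => ρL t / ρH t with hrdef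
  clear_value r
  have hrpos : ∀ t, (0:ℝ) ≤ t → 0 < r t := by
    intro t ht
    rw [hrdef]
    exact div_pos (hρLpos t ht) (hρHpos t ht)
  have hrder : ∀ t, (0:ℝ) ≤ t → HasDerivAt r (b t * r t) t := by
    intro t ht
    rw [hrdef, hbdef]
    have h := (hρL t ht).div (hρH t ht) (hρHpos t ht).ne'
    refine h.congr_deriv ?_
    have hHne := (hρHpos t ht).ne'
    have hvHne := (hvHpos t ht).ne'
    have hvLne := (hvLpos t ht).ne'
    beta_reduce
    field_simp
    ring
  have hlogder : ∀ t, (0:ℝ) ≤ t → HasDerivAt (fun t => Real.log (r t)) (b t) t := by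
    intro t ht
    have h := (hrder t ht).log (hrpos t ht).ne'
    convert h using 1
    rw [mul_div_assoc, div_self (hrpos t ht).ne', mul_one]
  -- log r grows at least linearly
  obtain ⟨T₀, hT₀⟩ := eventually_atTop.1 hbev
  set T : ℝ := max T₀ 0 with hTdef
  have hTnn : (0:ℝ) ≤ T := le_max_right _ _
  have hgd : ∀ x, (0:ℝ) ≤ x → HasDerivAt (fun t => Real.log (r t) - c0 * t) (b x - c0 * 1) x :=
    fun x hx => (hlogder x hx).sub ((hasDerivAt_id x).const_mul c0)
  have hmono : MonotoneOn (fun t => Real.log (r t) - c0 * t) (Ici T) := by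
    apply monotoneOn_of_deriv_nonneg (convex_Ici T)
    · intro u hu
      exact ((hgd u (hTnn.trans hu)).continuousAt).continuousWithinAt
    · intro x hx
      rw [interior_Ici] at hx
      exact ((hgd x (hTnn.trans hx.le)).differentiableAt).differentiableWithinAt
    · intro x hx
      rw [interior_Ici] at hx
      rw [(hgd x (hTnn.trans hx.le)).deriv]
      have := hT₀ x (le_trans (le_max_left _ _) hx.le)
      linarith
  have hloggrow : ∀ t, T ≤ t → c0 * t + (Real.log (r T) - c0 * T) ≤ Real.log (r t) := by
    intro t ht
    have := hmono (self_mem_Ici) (mem_Ici.2 ht) ht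
    simp only at this
    linarith
  have hlogtop : Tendsto (fun t => Real.log (r t)) atTop atTop := by
    apply tendsto_atTop_mono' atTop
      (eventually_atTop.2 ⟨T, hloggrow⟩)
    exact tendsto_atTop_add_const_right _ _ (tendsto_id.const_mul_atTop hc0)
  have hrtop : Tendsto r atTop atTop := by
    have h := Real.tendsto_exp_atTop.comp hlogtop
    apply h.congr'
    filter_upwards [eventually_ge_atTop (0:ℝ)] with t ht
    exact Real.exp_log (hrpos t ht)
  -- boundedness of the total population
  set MN : ℝ := max (ρH 0 + ρL 0) (γ * gb / d) with hMNdef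
  clear_value MN
  have hNle : ∀ t, (0:ℝ) ≤ t → ρH t + ρL t ≤ MN := by
    apply barrier_le (f' := fun t =>
      (γ * gb - γ / vH t - γ * (μH t - φb) ^ 2 - d * (ρH t + ρL t)) * ρH t
      + (γ * gb - γ / vL t - γ * (μL t - φb) ^ 2 - d * (ρH t + ρL t)) * ρL t)
      (fun t ht => (hρH t ht).add (hρL t ht))
    · intro t ht hMt
      rw [hMNdef] at hMt
      have hHp := hρHpos t ht
      have hLp := hρLpos t ht
      have hNpos : 0 < ρH t + ρL t := by linarith
      have hNd : γ * gb < d * (ρH t + ρL t) := by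
        have h1 : γ * gb / d < ρH t + ρL t := lt_of_le_of_lt (le_max_right _ _) hMt
        calc γ * gb = d * (γ * gb / d) := by field_simp
        _ < d * (ρH t + ρL t) := by exact (mul_lt_mul_iff_right₀ hd).2 h1
      have hvHp := hvHpos t ht
      have hvLp := hvLpos t ht
      have haH : γ * gb - γ / vH t - γ * (μH t - φb) ^ 2 - d * (ρH t + ρL t)
          ≤ γ * gb - d * (ρH t + ρL t) := by
        have : 0 < γ / vH t := by positivity
        linarith [mul_nonneg hγ.le (sq_nonneg (μH t - φb))]
      have haL : γ * gb - γ / vL t - γ * (μL t - φb) ^ 2 - d * (ρH t + ρL t)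
          ≤ γ * gb - d * (ρH t + ρL t) := by
        have : 0 < γ / vL t := by positivity
        linarith [mul_nonneg hγ.le (sq_nonneg (μL t - φb))]
      have hneg : γ * gb - d * (ρH t + ρL t) < 0 := by linarith
      calc (γ * gb - γ / vH t - γ * (μH t - φb) ^ 2 - d * (ρH t + ρL t)) * ρH t
            + (γ * gb - γ / vL t - γ * (μL t - φb) ^ 2 - d * (ρH t + ρL t)) * ρL t
          ≤ (γ * gb - d * (ρH t + ρL t)) * ρH t + (γ * gb - d * (ρH t + ρL t)) * ρL t := by
            have h1 := mul_le_mul_of_nonneg_right haH hHp.le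
            have h2 := mul_le_mul_of_nonneg_right haL hLp.le
            linarith
        _ = (γ * gb - d * (ρH t + ρL t)) * (ρH t + ρL t) := by ring
        _ < 0 := mul_neg_of_neg_of_pos hneg hNpos
    · rw [hMNdef]
      exact le_max_left _ _
  -- conclusion : ρH → 0
  have hρHto0 : Tendsto ρH atTop (nhds 0) := by
    apply squeeze_zero' (f := ρH) (g := fun t => MN / r t)
    · filter_upwards [eventually_ge_atTop (0:ℝ)] with t ht
      exact (hρHpos t ht).le
    · filter_upwards [eventually_ge_atTop (0:ℝ)] with t ht
      rw [le_div_iff₀ (hrpos t ht)]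
      have h1 : ρH t * r t = ρL t := by
        rw [hrdef]
        field_simp [(hρHpos t ht).ne']
      rw [h1]
      exact le_trans (by linarith [hρHpos t ht]) (hNle t ht)
    · exact hrtop.const_div_atTop MN
  exact ⟨hρHto0, hrtop⟩
end

section
/- Let γ > 0, d > 0, β_H > β_L > 0, ḡ > 0, φ̄ ∈ ℝ. For i ∈ {H, L}, let (v_i, μ_i, ρ_i) : [0,∞) → ℝ³ be differentiable functions with v_i(t) > 0 for all t ≥ 0, v_i(0) > 0, ρ_i(0) > 0, satisfying v_i' = 2(γ − β_i v_i²), μ_i' = (2γ/v_i)(φ̄ − μ_i), ρ_i' = (F_i(t) − d(ρ_H(t) + ρ_L(t))) ρ_i, where F_i(t) = γ ḡ − γ/v_i(t) − γ(μ_i(t) − φ̄)². If √(β_L) < √γ · ḡ, then as t → ∞: ρ_L(t) → (√γ/d)(√γ ḡ − √(β_L)), μ_L(t) → φ̄, and 1/v_L(t) → √(β_L/γ). -/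
open Filter Topology Set

/-- If the derivative is nonpositive on `[a,b]`, the function decreases. -/
lemma le_start {f φ : ℝ → ℝ} {a b : ℝ} (hab : a ≤ b)
    (hf : ∀ t ∈ Set.Icc a b, HasDerivAt f (φ t) t)
    (hφ : ∀ t ∈ Set.Icc a b, φ t ≤ 0) : f b ≤ f a := by
  have h := antitoneOn_of_deriv_nonpos (convex_Icc a b)
    (fun t ht => (hf t ht).continuousAt.continuousWithinAt)
    (fun t ht => (hf t (interior_subset ht)).differentiableAt.differentiableWithinAt)
    (fun t ht => by
      rw [(hf t (interior_subset ht)).deriv]; exact hφ t (interior_subset ht))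
  exact h (Set.left_mem_Icc.2 hab) (Set.right_mem_Icc.2 hab) hab

lemma ge_start {f φ : ℝ → ℝ} {a b : ℝ} (hab : a ≤ b)
    (hf : ∀ t ∈ Set.Icc a b, HasDerivAt f (φ t) t)
    (hφ : ∀ t ∈ Set.Icc a b, 0 ≤ φ t) : f a ≤ f b := by
  have h := le_start (f := fun s => -f s) (φ := fun s => -φ s) hab
    (fun t ht => (hf t ht).neg) (fun t ht => neg_nonpos.2 (hφ t ht))
  linarith

/-- If `f` has negative derivative at `t`, then `f u < f t` for `u` slightly to the right. -/
lemma eventually_lt_right {f : ℝ → ℝ} {c t : ℝ} (hf : HasDerivAt f c t) (hc : c < 0) :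
    ∀ᶠ u in 𝓝[>] t, f u < f t := by
  have h := hasDerivAt_iff_tendsto_slope.mp hf
  have h2 : ∀ᶠ u in 𝓝[≠] t, slope f t u < 0 := h.eventually (Iio_mem_nhds hc)
  have h3 : 𝓝[>] t ≤ 𝓝[≠] t := nhdsWithin_mono t (fun x hx => ne_of_gt hx)
  filter_upwards [h3 h2, self_mem_nhdsWithin] with u hu hu'
  rw [slope_def_field] at hu
  have hut : (0:ℝ) < u - t := sub_pos.2 hu'
  have := mul_neg_of_neg_of_pos hu hut
  rw [div_mul_cancel₀] at this
  · linarith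
  · exact ne_of_gt hut

/-- Barrier lemma: if the vector field points strictly down at the barrier `B`, a solution
starting below `B` stays below `B`. -/
lemma barrier_up {f φ : ℝ → ℝ} {a B : ℝ}
    (hf : ∀ t, a ≤ t → HasDerivAt f (φ t) t)
    (h0 : f a ≤ B)
    (hB : ∀ t, a ≤ t → B ≤ f t → φ t < 0) :
    ∀ t, a ≤ t → f t ≤ B := by
  intro t1 ht1
  by_contra hgt
  push_neg at hgt
  set K := {t ∈ Set.Icc a t1 | f t ≤ B} with hKdef
  have haK : a ∈ K := ⟨⟨le_refl a, ht1⟩, h0⟩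
  have hKne : K.Nonempty := ⟨a, haK⟩
  have hKbdd : BddAbove K := ⟨t1, fun x hx => hx.1.2⟩
  set t0 := sSup K with ht0def
  have ht0a : a ≤ t0 := le_csSup hKbdd haK
  have ht0le : t0 ≤ t1 := csSup_le hKne (fun x hx => hx.1.2)
  have hclos : t0 ∈ closure K := csSup_mem_closure hKne hKbdd
  have hcontAt : ContinuousAt f t0 := (hf t0 ht0a).continuousAt
  have hft0 : f t0 ≤ B := by
    by_contra hc
    push_neg at hc
    have hev : f ⁻¹' Set.Ioi B ∈ 𝓝 t0 := hcontAt (Ioi_mem_nhds hc)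
    rcases mem_closure_iff_nhds.mp hclos _ hev with ⟨x, hx1, hx2⟩
    exact absurd hx2.2 (not_le.2 hx1)
  have ht0lt : t0 < t1 :=
    lt_of_le_of_ne ht0le (fun h => absurd hft0 (not_le.2 (h ▸ hgt)))
  have habove : ∀ u, t0 < u → u ≤ t1 → B < f u := by
    intro u hu hu1
    by_contra h
    push_neg at h
    have : u ∈ K := ⟨⟨ht0a.trans hu.le, hu1⟩, h⟩
    exact absurd (le_csSup hKbdd this) (not_le.2 hu)
  have hIoc : Set.Ioo t0 t1 ∈ 𝓝[>] t0 := Ioo_mem_nhdsGT_of_mem ⟨le_refl t0, ht0lt⟩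
  have hIoc' : ∀ᶠ u in 𝓝[>] t0, u ∈ Set.Ioo t0 t1 := eventually_of_mem hIoc (fun x hx => hx)
  rcases eq_or_lt_of_le hft0 with heq | hlt
  · -- f t0 = B : derivative negative, f dips below B just right of t0
    have hφ : φ t0 < 0 := hB t0 ht0a heq.ge
    have hev := eventually_lt_right (hf t0 ht0a) hφ
    rcases (hev.and hIoc').exists with ⟨u, hu1, hu2⟩
    exact absurd (habove u hu2.1 hu2.2.le) (not_lt.2 (by rw [← heq]; exact hu1.le))
  · -- f t0 < B : by continuity f < B just right of t0
    have hev : f ⁻¹' Set.Iio B ∈ 𝓝 t0 := hcontAt (Iio_mem_nhds hlt)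
    have hev' : ∀ᶠ u in 𝓝[>] t0, f u < B := eventually_nhdsWithin_of_eventually_nhds hev
    rcases (hev'.and hIoc').exists with ⟨u, hu1, hu2⟩
    exact absurd (habove u hu2.1 hu2.2.le) (not_lt.2 hu1.le)

lemma barrier_down {f φ : ℝ → ℝ} {a B : ℝ}
    (hf : ∀ t, a ≤ t → HasDerivAt f (φ t) t)
    (h0 : B ≤ f a)
    (hB : ∀ t, a ≤ t → f t ≤ B → 0 < φ t) :
    ∀ t, a ≤ t → B ≤ f t := by
  intro t ht
  have := barrier_up (f := fun s => -f s) (φ := fun s => -φ s) (a := a) (B := -B)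
    (fun s hs => (hf s hs).neg) (by simpa using h0)
    (fun s hs hle => by
      have : f s ≤ B := by simpa using hle
      simpa using hB s hs this) t ht
  simpa using this

/-- If the derivative is `≤ -c` whenever the function is above `B`, the function eventually
reaches `B`. -/
lemma reach_below {f φ : ℝ → ℝ} {T B c : ℝ} (hc : 0 < c)
    (hf : ∀ t, T ≤ t → HasDerivAt f (φ t) t)
    (hφ : ∀ t, T ≤ t → B < f t → φ t ≤ -c) :
    ∃ t0, T ≤ t0 ∧ f t0 ≤ B := by
  by_contra h
  push_neg at h
  have key : ∀ t, T ≤ t → f t + c * t ≤ f T + c * T := by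
    intro t ht
    refine le_start (f := fun s => f s + c * s) (φ := fun s => φ s + c) ht
      (fun s hs => (hf s hs.1).add (by simpa using (hasDerivAt_id s).const_mul c))
      (fun s hs => ?_)
    show φ s + c ≤ 0
    have := hφ s hs.1 (h s hs.1); linarith
  set t := max T ((f T + c * T - B) / c + 1) with htdef
  have h1 : T ≤ t := le_max_left _ _
  have h2 : (f T + c * T - B) / c + 1 ≤ t := le_max_right _ _
  have h3 := key t h1
  have h4 : f T + c * T - B + c ≤ c * t := by
    have := mul_le_mul_of_nonneg_left h2 hc.le
    rw [mul_add, mul_one, mul_div_cancel₀ _ (ne_of_gt hc)] at this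
    linarith
  have := h T le_rfl
  have := h t h1
  linarith

lemma reach_above {f φ : ℝ → ℝ} {T B c : ℝ} (hc : 0 < c)
    (hf : ∀ t, T ≤ t → HasDerivAt f (φ t) t)
    (hφ : ∀ t, T ≤ t → f t < B → c ≤ φ t) :
    ∃ t0, T ≤ t0 ∧ B ≤ f t0 := by
  rcases reach_below (f := fun s => -f s) (φ := fun s => -φ s) (B := -B) hc
    (fun t ht => (hf t ht).neg)
    (fun t ht hlt => by
      have : f t < B := by simpa using hlt
      simpa using hφ t ht this) with ⟨t0, ht0, hle⟩
  exact ⟨t0, ht0, by simpa using hle⟩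

/-- Positivity is preserved along a linear (in `ρ`) ODE. -/
lemma pos_of_ode_s8 {ρ g : ℝ → ℝ}
    (h0 : 0 < ρ 0)
    (hρ : ∀ t, 0 ≤ t → HasDerivAt ρ (g t * ρ t) t)
    (hg : ∀ t, 0 ≤ t → ContinuousAt g t) :
    ∀ t, 0 ≤ t → 0 < ρ t := by
  have hne : ∀ s, 0 ≤ s → ρ s ≠ 0 := by
    intro s hs hzero
    -- bound on |g| on [0, s]
    have hgc : ContinuousOn g (Set.Icc 0 s) := fun t ht => (hg t ht.1).continuousWithinAt
    rcases (isCompact_Icc).exists_bound_of_continuousOn hgc with ⟨C, hC⟩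
    set K := max C 0 with hKdef
    have hK0 : 0 ≤ K := le_max_right _ _
    -- reversed function
    set r : ℝ → ℝ := fun t => ρ (s - t) with hrdef
    have hrD : ∀ t ∈ Set.Icc 0 s, HasDerivAt r (-(g (s - t) * ρ (s - t))) t := by
      intro t ht
      have hst : 0 ≤ s - t := by simp [ht.2]
      have hinner : HasDerivAt (fun u => s - u) (-1) t := by
        simpa using (hasDerivAt_id t).const_sub s
      have := (hρ (s - t) hst).comp t hinner
      refine this.congr_deriv ?_
      ring
    have hgron := norm_le_gronwallBound_of_norm_deriv_right_le
      (f := r) (f' := fun t => -(g (s - t) * ρ (s - t))) (δ := 0) (K := K) (ε := 0)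
      (a := 0) (b := s)
      (fun t ht => (hrD t ht).continuousAt.continuousWithinAt)
      (fun t ht => (hrD t (Set.Ico_subset_Icc_self ht)).hasDerivWithinAt)
      (by simp [hrdef, hzero])
      (fun t ht => by
        have ht' : s - t ∈ Set.Icc 0 s := ⟨by simp [ht.2.le], by simp [ht.1]⟩
        have h1 : |g (s - t)| ≤ K := le_trans (hC _ ht') (le_max_left _ _)
        have : ‖-(g (s - t) * ρ (s - t))‖ = |g (s - t)| * ‖r t‖ := by
          simp [hrdef, abs_mul]
        rw [this]
        have := mul_le_mul_of_nonneg_right h1 (norm_nonneg (r t))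
        linarith)
    have hend := hgron s (Set.right_mem_Icc.2 hs)
    rw [gronwallBound_ε0] at hend
    simp [hrdef] at hend
    exact absurd hend (by positivity)
  intro t ht
  rcases lt_trichotomy (ρ t) 0 with hlt | heq | hgt
  · -- IVT gives a zero in between
    have hcont : ContinuousOn ρ (Set.Icc 0 t) := fun u hu => (hρ u hu.1).continuousAt.continuousWithinAt
    have h0t : (0:ℝ) ∈ Set.Icc (ρ t) (ρ 0) := ⟨hlt.le, h0.le⟩
    rcases intermediate_value_Icc' ht hcont h0t with ⟨u, hu, hu0⟩
    exact absurd hu0 (hne u hu.1)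
  · exact absurd heq (hne t ht)
  · exact hgt

lemma hasDerivAt_exp_cmul (c t : ℝ) :
    HasDerivAt (fun u => Real.exp (c * u)) (c * Real.exp (c * t)) t := by
  have h1 : HasDerivAt (fun u : ℝ => c * u) c t := by simpa using (hasDerivAt_id t).const_mul c
  have h2 := h1.exp
  convert h2 using 1
  ring

lemma tendsto_exp_neg_cmul (c : ℝ) (hc : 0 < c) :
    Tendsto (fun t : ℝ => Real.exp (-(c * t))) atTop (𝓝 0) :=
  Real.tendsto_exp_neg_atTop_nhds_zero.comp (Tendsto.const_mul_atTop hc tendsto_id)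

/-- Convergence of the variance and mean equations for a single population. -/
lemma pop_conv {γ β φb : ℝ} (hγ : 0 < γ) (hβ : 0 < β) {v μ : ℝ → ℝ}
    (hvpos : ∀ t, 0 ≤ t → 0 < v t)
    (hv : ∀ t, 0 ≤ t → HasDerivAt v (2 * (γ - β * v t ^ 2)) t)
    (hμ : ∀ t, 0 ≤ t → HasDerivAt μ ((2 * γ / v t) * (φb - μ t)) t) :
    Tendsto v atTop (𝓝 (Real.sqrt (γ / β))) ∧ Tendsto μ atTop (𝓝 φb) := by
  set V := Real.sqrt (γ / β) with hVdef
  have hV : 0 < V := Real.sqrt_pos.2 (div_pos hγ hβ)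
  have hVsq : V ^ 2 = γ / β := Real.sq_sqrt (div_pos hγ hβ).le
  have hγeq : γ = β * V ^ 2 := by rw [hVsq]; field_simp
  set k := 4 * β * V with hkdef
  have hk : 0 < k := by positivity
  set w : ℝ → ℝ := fun t => (v t - V) / (v t + V) with hwdef
  have hden : ∀ t, 0 ≤ t → 0 < v t + V := fun t ht => by
    have := hvpos t ht; linarith
  have hw1 : ∀ t, 0 ≤ t → w t < 1 := by
    intro t ht
    rw [hwdef]
    have := hvpos t ht
    rw [div_lt_one (hden t ht)]; linarith
  have hwm1 : ∀ t, 0 ≤ t → -1 < w t := by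
    intro t ht
    rw [hwdef]
    have := hvpos t ht
    rw [lt_div_iff₀ (hden t ht)]; linarith
  have hwD : ∀ t, 0 ≤ t → HasDerivAt w (-k * w t) t := by
    intro t ht
    have hne : v t + V ≠ 0 := ne_of_gt (hden t ht)
    have h1 := ((hv t ht).sub_const V).div ((hv t ht).add_const V) hne
    refine h1.congr_deriv ?_
    rw [hwdef]
    field_simp
    rw [hγeq]
    ring
  -- w t = w 0 * exp (-k t) on [0, ∞)
  have hz : ∀ t, 0 ≤ t → w t * Real.exp (k * t) = w 0 := by
    intro t ht
    have hzD : ∀ s ∈ Set.Icc 0 t, HasDerivAt (fun u => w u * Real.exp (k * u)) 0 s := by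
      intro s hs
      have := (hwD s hs.1).mul (hasDerivAt_exp_cmul k s)
      refine this.congr_deriv ?_
      ring
    have h1 := le_start (φ := fun _ => (0:ℝ)) ht hzD (fun s _ => le_refl 0)
    have h2 := ge_start (φ := fun _ => (0:ℝ)) ht hzD (fun s _ => le_refl 0)
    have : w 0 * Real.exp (k * 0) = w 0 := by simp
    rw [← this]
    exact le_antisymm h1 h2
  have hwexp : ∀ t, 0 ≤ t → w t = w 0 * Real.exp (-(k * t)) := by
    intro t ht
    have := hz t ht
    rw [Real.exp_neg]
    field_simp
    linarith [this]
  -- w → 0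
  have hwto : Tendsto w atTop (𝓝 0) := by
    have h1 : Tendsto (fun t : ℝ => w 0 * Real.exp (-(k * t))) atTop (𝓝 (w 0 * 0)) :=
      Tendsto.const_mul _ (tendsto_exp_neg_cmul k hk)
    rw [mul_zero] at h1
    exact h1.congr' (by
      filter_upwards [eventually_ge_atTop (0:ℝ)] with t ht
      exact (hwexp t ht).symm)
  -- v t = V * (1 + w t) / (1 - w t)
  have hvw : ∀ t, 0 ≤ t → v t = V * (1 + w t) / (1 - w t) := by
    intro t ht
    have hne : v t + V ≠ 0 := ne_of_gt (hden t ht)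
    have h1 : w t * (v t + V) = v t - V := by
      rw [hwdef]; field_simp
    have h2 : 1 - w t ≠ 0 := sub_ne_zero.2 (ne_of_lt (hw1 t ht)).symm
    rw [eq_div_iff h2]
    linear_combination -h1
  have hvto : Tendsto v atTop (𝓝 V) := by
    have h1 : Tendsto (fun t => V * (1 + w t) / (1 - w t)) atTop (𝓝 (V * (1 + 0) / (1 - 0))) := by
      apply Tendsto.div
      · exact (tendsto_const_nhds.mul (tendsto_const_nhds.add hwto))
      · exact tendsto_const_nhds.sub hwto
      · norm_num
    simp only [add_zero, sub_zero, mul_one, div_one] at h1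
    exact h1.congr' (by
      filter_upwards [eventually_ge_atTop (0:ℝ)] with t ht
      exact (hvw t ht).symm)
  refine ⟨hvto, ?_⟩
  -- upper bound on v
  set W := |w 0| with hWdef
  have hW1 : W < 1 := abs_lt.2 ⟨hwm1 0 le_rfl, hw1 0 le_rfl⟩
  have hW0 : 0 ≤ W := abs_nonneg _
  have hwabs : ∀ t, 0 ≤ t → |w t| ≤ W := by
    intro t ht
    rw [hwexp t ht, abs_mul, Real.abs_exp]
    have : Real.exp (-(k * t)) ≤ 1 := Real.exp_le_one_iff.2 (by nlinarith)
    nlinarith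
  set M := V * (1 + W) / (1 - W) with hMdef
  have hM : 0 < M := by
    apply div_pos
    · nlinarith
    · linarith
  have hvM : ∀ t, 0 ≤ t → v t ≤ M := by
    intro t ht
    rw [hvw t ht, hMdef]
    have h2 := abs_le.1 (hwabs t ht)
    exact div_le_div₀ (by nlinarith) (by nlinarith) (by linarith) (by linarith)
  -- μ convergence
  set c := 2 * γ / M with hcdef
  have hc : 0 < c := by positivity
  have hED : ∀ t, 0 ≤ t → HasDerivAt (fun u => (μ u - φb) ^ 2 * Real.exp (2 * c * u))
      (((2 * c - 4 * γ / v t) * (μ t - φb) ^ 2) * Real.exp (2 * c * t)) t := by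
    intro t ht
    have hsq : HasDerivAt (fun u => (μ u - φb) ^ 2)
        (2 * (μ t - φb) * ((2 * γ / v t) * (φb - μ t))) t := by
      have := ((hμ t ht).sub_const φb).pow 2
      refine this.congr_deriv ?_
      ring
    have := hsq.mul (hasDerivAt_exp_cmul (2 * c) t)
    refine this.congr_deriv ?_
    have hvne : v t ≠ 0 := ne_of_gt (hvpos t ht)
    field_simp
    ring
  have hEdec : ∀ t, 0 ≤ t → (μ t - φb) ^ 2 * Real.exp (2 * c * t) ≤ (μ 0 - φb) ^ 2 := by
    intro t ht
    have h1 := le_start (f := fun u => (μ u - φb) ^ 2 * Real.exp (2 * c * u))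
      (φ := fun u => ((2 * c - 4 * γ / v u) * (μ u - φb) ^ 2) * Real.exp (2 * c * u)) ht
      (fun s hs => hED s hs.1)
      (fun s hs => by
        show ((2 * c - 4 * γ / v s) * (μ s - φb) ^ 2) * Real.exp (2 * c * s) ≤ 0
        have hvs := hvpos s hs.1
        have hvMs := hvM s hs.1
        have h2 : 2 * c ≤ 4 * γ / v s := by
          have h3 : 4 * γ / M ≤ 4 * γ / v s :=
            div_le_div_of_nonneg_left (by positivity) hvs hvMs
          have h4 : 2 * c = 4 * γ / M := by rw [hcdef]; ring
          linarith
        have h3 : (0:ℝ) < Real.exp (2 * c * s) := Real.exp_pos _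
        have hA : 2 * c - 4 * γ / v s ≤ 0 := by linarith
        have h4 : (2 * c - 4 * γ / v s) * (μ s - φb) ^ 2 ≤ 0 :=
          mul_nonpos_iff.2 (Or.inr ⟨hA, sq_nonneg _⟩)
        exact mul_nonpos_iff.2 (Or.inr ⟨h4, h3.le⟩))
    simpa using h1
  have hsqto : Tendsto (fun t => (μ t - φb) ^ 2) atTop (𝓝 0) := by
    apply squeeze_zero' (g := fun t => (μ 0 - φb) ^ 2 * Real.exp (-(2 * c * t)))
    · filter_upwards with t; positivity
    · filter_upwards [eventually_ge_atTop (0:ℝ)] with t ht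
      have h2 : (0:ℝ) < Real.exp (2 * c * t) := Real.exp_pos _
      rw [Real.exp_neg, mul_comm ((μ 0 - φb) ^ 2), inv_mul_eq_div, le_div_iff₀ h2]
      exact hEdec t ht
    · have h1 := tendsto_exp_neg_cmul (2 * c) (by positivity)
      simpa using h1.const_mul ((μ 0 - φb) ^ 2)
  have habs : Tendsto (fun t => |μ t - φb|) atTop (𝓝 0) := by
    have h := (Real.continuous_sqrt.tendsto 0).comp hsqto
    rw [Real.sqrt_zero] at h
    exact h.congr (fun t => Real.sqrt_sq_eq_abs _)
  have hμto : Tendsto (fun t => μ t - φb) atTop (𝓝 0) :=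
    squeeze_zero_norm (fun t => le_refl _) habs
  have := hμto.add_const φb
  simpa using this

set_option maxHeartbeats 2000000 in
/-- Theorem 1 (ii), convergence part, at the level of the reduced ODE system:
if `√(β_L) < √γ · ḡ`, the surviving population `L` equilibrates to size
`(√γ/d)(√γ ḡ − √β_L)`, mean phenotype `φ̄` and variance `1/v_L → √(β_L/γ)`. -/
theorem stmt_8 (γ d βH βL gb φb : ℝ)
    (hγ : 0 < γ) (hd : 0 < d) (hβL : 0 < βL) (hβ : βL < βH) (hgb : 0 < gb)
    (vH μH ρH vL μL ρL : ℝ → ℝ)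
    (hvHpos : ∀ t, 0 ≤ t → 0 < vH t) (hvLpos : ∀ t, 0 ≤ t → 0 < vL t)
    (hρH0 : 0 < ρH 0) (hρL0 : 0 < ρL 0)
    (hvH : ∀ t, 0 ≤ t → HasDerivAt vH (2 * (γ - βH * (vH t) ^ 2)) t)
    (hvL : ∀ t, 0 ≤ t → HasDerivAt vL (2 * (γ - βL * (vL t) ^ 2)) t)
    (hμH : ∀ t, 0 ≤ t → HasDerivAt μH ((2 * γ / vH t) * (φb - μH t)) t)
    (hμL : ∀ t, 0 ≤ t → HasDerivAt μL ((2 * γ / vL t) * (φb - μL t)) t)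
    (hρH : ∀ t, 0 ≤ t → HasDerivAt ρH
      ((γ * gb - γ / vH t - γ * (μH t - φb) ^ 2 - d * (ρH t + ρL t)) * ρH t) t)
    (hρL : ∀ t, 0 ≤ t → HasDerivAt ρL
      ((γ * gb - γ / vL t - γ * (μL t - φb) ^ 2 - d * (ρH t + ρL t)) * ρL t) t)
    (hcond : Real.sqrt βL < Real.sqrt γ * gb) :
    Tendsto ρL atTop (nhds (Real.sqrt γ / d * (Real.sqrt γ * gb - Real.sqrt βL))) ∧
    Tendsto μL atTop (nhds φb) ∧
    Tendsto (fun t => 1 / vL t) atTop (nhds (Real.sqrt (βL / γ))) := by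
  have hβH : 0 < βH := lt_trans hβL hβ
  obtain ⟨hvLto, hμLto⟩ := pop_conv hγ hβL hvLpos hvL hμL
  obtain ⟨hvHto, hμHto⟩ := pop_conv hγ hβH hvHpos hvH hμH
  have hVL : 0 < Real.sqrt (γ / βL) := Real.sqrt_pos.2 (div_pos hγ hβL)
  have hVH : 0 < Real.sqrt (γ / βH) := Real.sqrt_pos.2 (div_pos hγ hβH)
  -- limits of 1/v
  have hsqinv : ∀ β : ℝ, 0 < β → Real.sqrt (β / γ) = 1 / Real.sqrt (γ / β) := by
    intro β hβ'
    rw [one_div, ← Real.sqrt_inv, inv_div]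
  have hinvL : Tendsto (fun t => 1 / vL t) atTop (𝓝 (Real.sqrt (βL / γ))) := by
    rw [hsqinv βL hβL]
    exact tendsto_const_nhds.div hvLto (ne_of_gt hVL)
  have hinvH : Tendsto (fun t => 1 / vH t) atTop (𝓝 (Real.sqrt (βH / γ))) := by
    rw [hsqinv βH hβH]
    exact tendsto_const_nhds.div hvHto (ne_of_gt hVH)
  refine ⟨?_, hμLto, hinvL⟩
  -- fitness limits
  have hsqmul : ∀ β : ℝ, 0 < β → γ * Real.sqrt (β / γ) = Real.sqrt (γ * β) := by
    intro β hβ'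
    rw [show γ * β = γ ^ 2 * (β / γ) by field_simp, Real.sqrt_mul (sq_nonneg γ),
      Real.sqrt_sq hγ.le]
  set FL : ℝ → ℝ := fun t => γ * gb - γ / vL t - γ * (μL t - φb) ^ 2 with hFLdef
  set FH : ℝ → ℝ := fun t => γ * gb - γ / vH t - γ * (μH t - φb) ^ 2 with hFHdef
  set FLs := γ * gb - Real.sqrt (γ * βL) with hFLsdef
  set FHs := γ * gb - Real.sqrt (γ * βH) with hFHsdef
  have hFto : ∀ (β : ℝ) (hβ' : 0 < β) (v μ : ℝ → ℝ),
      Tendsto (fun t => 1 / v t) atTop (𝓝 (Real.sqrt (β / γ))) →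
      Tendsto μ atTop (𝓝 φb) →
      Tendsto (fun t => γ * gb - γ / v t - γ * (μ t - φb) ^ 2) atTop
        (𝓝 (γ * gb - Real.sqrt (γ * β))) := by
    intro β hβ' v μ hv' hμ'
    have h1 : Tendsto (fun t => γ / v t) atTop (𝓝 (Real.sqrt (γ * β))) := by
      rw [← hsqmul β hβ']
      exact (hv'.const_mul γ).congr (fun t => by rw [mul_one_div])
    have h2 := ((hμ'.sub_const φb).pow 2).const_mul γ
    have h3 : Tendsto (fun t => γ * gb - γ / v t - γ * (μ t - φb) ^ 2) atTop
        (𝓝 (γ * gb - Real.sqrt (γ * β) - γ * (φb - φb) ^ 2)) :=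
      (Tendsto.sub (tendsto_const_nhds (x := γ * gb)) h1).sub h2
    simpa using h3
  have hFLto : Tendsto FL atTop (𝓝 FLs) := hFto βL hβL vL μL hinvL hμLto
  have hFHto : Tendsto FH atTop (𝓝 FHs) := hFto βH hβH vH μH hinvH hμHto
  have hsqγβL : Real.sqrt (γ * βL) = Real.sqrt γ * Real.sqrt βL := Real.sqrt_mul hγ.le βL
  have hsqγ : Real.sqrt γ * Real.sqrt γ = γ := Real.mul_self_sqrt hγ.le
  have hsγ : 0 < Real.sqrt γ := Real.sqrt_pos.2 hγ
  have hFLspos : 0 < FLs := by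
    rw [hFLsdef, hsqγβL]
    have := mul_lt_mul_of_pos_left hcond hsγ
    nlinarith
  have hgap : FHs < FLs := by
    rw [hFLsdef, hFHsdef]
    have h1 : Real.sqrt (γ * βL) < Real.sqrt (γ * βH) :=
      Real.sqrt_lt_sqrt (mul_pos hγ hβL).le (by nlinarith)
    linarith
  -- positivity of ρH, ρL
  have hcontg : ∀ (β : ℝ) (v μ : ℝ → ℝ), (∀ t, 0 ≤ t → 0 < v t) →
      (∀ t, 0 ≤ t → HasDerivAt v (2 * (γ - β * v t ^ 2)) t) →
      (∀ t, 0 ≤ t → HasDerivAt μ ((2 * γ / v t) * (φb - μ t)) t) →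
      ∀ t, 0 ≤ t → ContinuousAt
        (fun s => γ * gb - γ / v s - γ * (μ s - φb) ^ 2 - d * (ρH s + ρL s)) t := by
    intro β v μ hvp hv' hμ' t ht
    have hcv : ContinuousAt v t := (hv' t ht).continuousAt
    have hcμ : ContinuousAt μ t := (hμ' t ht).continuousAt
    have hcρH : ContinuousAt ρH t := (hρH t ht).continuousAt
    have hcρL : ContinuousAt ρL t := (hρL t ht).continuousAt
    exact ((continuousAt_const.sub (continuousAt_const.div hcv (ne_of_gt (hvp t ht)))).sub
      (continuousAt_const.mul ((hcμ.sub continuousAt_const).pow 2))).sub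
      (continuousAt_const.mul (hcρH.add hcρL))
  have hρLpos : ∀ t, 0 ≤ t → 0 < ρL t :=
    pos_of_ode_s8 (g := fun s => γ * gb - γ / vL s - γ * (μL s - φb) ^ 2 - d * (ρH s + ρL s))
      hρL0 hρL (hcontg βL vL μL hvLpos hvL hμL)
  have hρHpos : ∀ t, 0 ≤ t → 0 < ρH t :=
    pos_of_ode_s8 (g := fun s => γ * gb - γ / vH s - γ * (μH s - φb) ^ 2 - d * (ρH s + ρL s))
      hρH0 hρH (hcontg βH vH μH hvHpos hvH hμH)
  -- bound on total population
  set B0 := max (ρH 0 + ρL 0) (γ * gb / d) + 1 with hB0def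
  have hB0d : γ * gb + d ≤ d * B0 := by
    have h1 : γ * gb / d ≤ max (ρH 0 + ρL 0) (γ * gb / d) := le_max_right _ _
    have h2 := mul_le_mul_of_nonneg_left h1 hd.le
    rw [mul_div_cancel₀ _ (ne_of_gt hd)] at h2
    rw [hB0def]
    nlinarith
  have hB0pos : 0 < B0 := by
    have := le_max_left (ρH 0 + ρL 0) (γ * gb / d)
    have := hρH0; have := hρL0
    rw [hB0def]; nlinarith [le_max_left (ρH 0 + ρL 0) (γ * gb / d)]
  have hSB : ∀ t, 0 ≤ t → ρH t + ρL t ≤ B0 := by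
    refine barrier_up (f := fun t => ρH t + ρL t)
      (φ := fun t => (γ * gb - γ / vH t - γ * (μH t - φb) ^ 2 - d * (ρH t + ρL t)) * ρH t
        + (γ * gb - γ / vL t - γ * (μL t - φb) ^ 2 - d * (ρH t + ρL t)) * ρL t)
      (fun t ht => (hρH t ht).add (hρL t ht)) (by rw [hB0def]; nlinarith [le_max_left (ρH 0 + ρL 0) (γ * gb / d)]) ?_
    intro t ht hBle
    show (γ * gb - γ / vH t - γ * (μH t - φb) ^ 2 - d * (ρH t + ρL t)) * ρH t
        + (γ * gb - γ / vL t - γ * (μL t - φb) ^ 2 - d * (ρH t + ρL t)) * ρL t < 0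
    have h1 : 0 < γ / vH t := div_pos hγ (hvHpos t ht)
    have h2 : 0 < γ / vL t := div_pos hγ (hvLpos t ht)
    have h3 : d * B0 ≤ d * (ρH t + ρL t) := mul_le_mul_of_nonneg_left hBle hd.le
    have h4 : γ * gb - γ / vH t - γ * (μH t - φb) ^ 2 - d * (ρH t + ρL t) < 0 := by
      nlinarith [sq_nonneg (μH t - φb)]
    have h5 : γ * gb - γ / vL t - γ * (μL t - φb) ^ 2 - d * (ρH t + ρL t) < 0 := by
      nlinarith [sq_nonneg (μL t - φb)]
    have := mul_neg_of_neg_of_pos h4 (hρHpos t ht)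
    have := mul_neg_of_neg_of_pos h5 (hρLpos t ht)
    linarith
  -- ratio q = ρH / ρL tends to 0
  set q : ℝ → ℝ := fun t => ρH t / ρL t with hqdef
  have hqD : ∀ t, 0 ≤ t → HasDerivAt q ((FH t - FL t) * q t) t := by
    intro t ht
    have hne : ρL t ≠ 0 := ne_of_gt (hρLpos t ht)
    have h1 := (hρH t ht).div (hρL t ht) hne
    refine h1.congr_deriv ?_
    rw [hqdef, hFHdef, hFLdef]
    field_simp
    ring
  set δ := (FLs - FHs) / 2 with hδdef
  have hδpos : 0 < δ := by rw [hδdef]; linarith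
  have hev : ∀ᶠ t in atTop, FH t - FL t < -δ := by
    refine Tendsto.eventually_lt_const ?_ (hFHto.sub hFLto)
    rw [hδdef]; linarith
  obtain ⟨T1, hT1⟩ := eventually_atTop.1 (hev.and (eventually_ge_atTop (0:ℝ)))
  set T := max T1 0 with hTdef
  have hTnn : (0:ℝ) ≤ T := le_max_right _ _
  have hTgap : ∀ t, T ≤ t → FH t - FL t < -δ ∧ 0 ≤ t := fun t ht =>
    hT1 t (le_trans (le_max_left _ _) ht)
  -- q² e^{2δt} is nonincreasing on [T, ∞)
  have hqdec : ∀ t, T ≤ t → q t ^ 2 ≤ (q T ^ 2 * Real.exp (2 * δ * T)) * Real.exp (-(2 * δ * t)) := by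
    intro t ht
    have huD : ∀ s ∈ Set.Icc T t, HasDerivAt (fun u => q u ^ 2 * Real.exp (2 * δ * u))
        ((2 * (FH s - FL s) + 2 * δ) * q s ^ 2 * Real.exp (2 * δ * s)) s := by
      intro s hs
      have hs0 : 0 ≤ s := le_trans hTnn hs.1
      have hsq : HasDerivAt (fun u => q u ^ 2) (2 * q s * ((FH s - FL s) * q s)) s := by
        have := (hqD s hs0).pow 2
        refine this.congr_deriv ?_
        ring
      have := hsq.mul (hasDerivAt_exp_cmul (2 * δ) s)
      refine this.congr_deriv ?_
      ring
    have h1 := le_start (φ := fun s => (2 * (FH s - FL s) + 2 * δ) * q s ^ 2 * Real.exp (2 * δ * s))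
      ht huD (fun s hs => by
        show (2 * (FH s - FL s) + 2 * δ) * q s ^ 2 * Real.exp (2 * δ * s) ≤ 0
        have hgap2 := (hTgap s hs.1).1
        have hA : 2 * (FH s - FL s) + 2 * δ ≤ 0 := by linarith
        have h4 : (2 * (FH s - FL s) + 2 * δ) * q s ^ 2 ≤ 0 :=
          mul_nonpos_iff.2 (Or.inr ⟨hA, sq_nonneg _⟩)
        exact mul_nonpos_iff.2 (Or.inr ⟨h4, (Real.exp_pos _).le⟩))
    have h3 : q t ^ 2 * Real.exp (2 * δ * t) ≤ q T ^ 2 * Real.exp (2 * δ * T) := by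
      simpa using h1
    calc q t ^ 2 = (q t ^ 2 * Real.exp (2 * δ * t)) * Real.exp (-(2 * δ * t)) := by
          rw [Real.exp_neg]; field_simp
      _ ≤ (q T ^ 2 * Real.exp (2 * δ * T)) * Real.exp (-(2 * δ * t)) :=
          mul_le_mul_of_nonneg_right h3 (Real.exp_pos _).le
  have hq2to : Tendsto (fun t => q t ^ 2) atTop (𝓝 0) := by
    apply squeeze_zero' (g := fun t => (q T ^ 2 * Real.exp (2 * δ * T)) * Real.exp (-(2 * δ * t)))
    · filter_upwards with t; positivity
    · filter_upwards [eventually_ge_atTop T] with t ht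
      exact hqdec t ht
    · have h1 := tendsto_exp_neg_cmul (2 * δ) (by positivity)
      simpa using h1.const_mul (q T ^ 2 * Real.exp (2 * δ * T))
  have habsq : Tendsto (fun t => |q t|) atTop (𝓝 0) := by
    have h := (Real.continuous_sqrt.tendsto 0).comp hq2to
    rw [Real.sqrt_zero] at h
    exact h.congr (fun t => Real.sqrt_sq_eq_abs _)
  have hρHto : Tendsto ρH atTop (𝓝 0) := by
    have hb : ∀ᶠ t in atTop, ‖ρH t‖ ≤ B0 * |q t| := by
      filter_upwards [eventually_ge_atTop (0:ℝ)] with t ht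
      have hne : ρL t ≠ 0 := ne_of_gt (hρLpos t ht)
      have h1 : ρH t = q t * ρL t := by rw [hqdef]; field_simp
      have h2 : ρL t ≤ B0 := by have := hSB t ht; have := hρHpos t ht; linarith
      have h3 : 0 < ρL t := hρLpos t ht
      rw [Real.norm_eq_abs, h1, abs_mul, abs_of_pos h3]
      calc |q t| * ρL t ≤ |q t| * B0 := mul_le_mul_of_nonneg_left h2 (abs_nonneg _)
        _ = B0 * |q t| := by ring
    exact squeeze_zero_norm' hb (by simpa using habsq.const_mul B0)
  -- the limiting logistic coefficient
  set aF : ℝ → ℝ := fun t => FL t - d * ρH t with haFdef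
  have hato : Tendsto aF atTop (𝓝 FLs) := by
    have := hFLto.sub (hρHto.const_mul d)
    simpa [haFdef, mul_comm] using this
  have hρL' : ∀ t, 0 ≤ t → HasDerivAt ρL ((aF t - d * ρL t) * ρL t) t := by
    intro t ht
    convert hρL t ht using 1
    simp only [haFdef, hFLdef]
    ring
  -- final value identity
  have hval : Real.sqrt γ / d * (Real.sqrt γ * gb - Real.sqrt βL) = FLs / d := by
    rw [hFLsdef, hsqγβL, div_mul_eq_mul_div]
    congr 1
    linear_combination gb * hsqγ
  rw [hval]
  rw [Metric.tendsto_atTop]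
  intro ε hε
  set ε' := min (ε / 2) (FLs / (2 * d)) with hε'def
  have hε'pos : 0 < ε' := lt_min (by linarith) (by positivity)
  have hε'le : ε' ≤ ε / 2 := min_le_left _ _
  have hε'le2 : ε' ≤ FLs / (2 * d) := min_le_right _ _
  have hhalf : FLs / d - FLs / (2 * d) = FLs / (2 * d) := by field_simp; ring
  have hLεpos : 0 < FLs / d - ε' := by
    have h1 : 0 < FLs / (2 * d) := by positivity
    linarith
  have hBεpos : 0 < FLs / d + ε' := by positivity
  set Bε := FLs / d + ε' with hBεdef
  set Lε := FLs / d - ε' with hLεdef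
  have hdd : d * (FLs / d) = FLs := by field_simp
  have hdε : 0 < d * ε' := by positivity
  have hdBε : d * Bε = FLs + d * ε' := by rw [hBεdef, mul_add, hdd]
  have hdLε : d * Lε = FLs - d * ε' := by rw [hLεdef, mul_sub, hdd]
  clear_value Bε Lε ε' aF FL FH FLs FHs
  have heva : ∀ᶠ t in atTop, |aF t - FLs| < d * ε' / 2 ∧ 0 ≤ t := by
    have h1 := Metric.tendsto_nhds.mp hato (d * ε' / 2) (by positivity)
    have h2 : ∀ᶠ t in atTop, |aF t - FLs| < d * ε' / 2 := by
      filter_upwards [h1] with t ht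
      rwa [Real.dist_eq] at ht
    exact h2.and (eventually_ge_atTop 0)
  obtain ⟨T0, hT0⟩ := eventually_atTop.1 heva
  set T2 := max T0 0 with hT2def
  have hT2nn : (0:ℝ) ≤ T2 := le_max_right _ _
  have hT2 : ∀ t, T2 ≤ t → |aF t - FLs| < d * ε' / 2 ∧ 0 ≤ t := fun t ht =>
    hT0 t (le_trans (le_max_left _ _) ht)
  have hρL'' : ∀ t, T2 ≤ t → HasDerivAt ρL ((aF t - d * ρL t) * ρL t) t := fun t ht =>
    hρL' t (le_trans hT2nn ht)
  -- eventually below Bε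
  have claim1 : ∃ t0, T2 ≤ t0 ∧ ρL t0 ≤ Bε := by
    refine reach_below (c := d * ε' / 2 * Bε) (by positivity) hρL'' ?_
    intro t ht hgt
    obtain ⟨ha1, ht0⟩ := hT2 t ht
    have ha2 : aF t < FLs + d * ε' / 2 := by
      have := abs_lt.1 ha1; linarith [this.2]
    have h1 : aF t - d * ρL t ≤ -(d * ε' / 2) := by
      have h2 : d * Bε ≤ d * ρL t := mul_le_mul_of_nonneg_left hgt.le hd.le
      linarith
    calc (aF t - d * ρL t) * ρL t ≤ -(d * ε' / 2) * ρL t :=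
          mul_le_mul_of_nonneg_right h1 (hρLpos t ht0).le
      _ ≤ -(d * ε' / 2) * Bε := by nlinarith
      _ = -(d * ε' / 2 * Bε) := by ring
  obtain ⟨t0, ht0T, ht0le⟩ := claim1
  have hup : ∀ t, t0 ≤ t → ρL t ≤ Bε := by
    refine barrier_up (fun t ht => hρL'' t (le_trans ht0T ht)) ht0le ?_
    intro t ht hBle
    have ht2 : T2 ≤ t := le_trans ht0T ht
    obtain ⟨ha1, htnn⟩ := hT2 t ht2
    have ha2 : aF t < FLs + d * ε' / 2 := by
      have := abs_lt.1 ha1; linarith [this.2]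
    have h1 : aF t - d * ρL t < 0 := by
      have h2 : d * Bε ≤ d * ρL t := mul_le_mul_of_nonneg_left hBle hd.le
      linarith
    exact mul_neg_of_neg_of_pos h1 (hρLpos t htnn)
  -- eventually above Lε
  have claim2 : ∃ t1, T2 ≤ t1 ∧ Lε ≤ ρL t1 := by
    by_contra hcon
    push_neg at hcon
    have hbelow : ∀ t, T2 ≤ t → ρL t < Lε := fun t ht => hcon t ht
    have hmono : ∀ t, T2 ≤ t → ρL T2 ≤ ρL t := by
      intro t ht
      refine ge_start ht (fun s hs => hρL'' s hs.1) ?_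
      intro s hs
      show 0 ≤ (aF s - d * ρL s) * ρL s
      obtain ⟨ha1, hsnn⟩ := hT2 s hs.1
      have ha2 : FLs - d * ε' / 2 < aF s := by
        have := abs_lt.1 ha1; linarith [this.1]
      have h2 : d * ρL s < d * Lε := mul_lt_mul_of_pos_left (hbelow s hs.1) hd
      have h3 : 0 < aF s - d * ρL s := by linarith
      exact (mul_pos h3 (hρLpos s hsnn)).le
    have hmpos : 0 < ρL T2 := hρLpos T2 hT2nn
    have hstep : ∀ t, T2 ≤ t → ρL t < Lε → d * ε' / 2 * ρL T2 ≤ (aF t - d * ρL t) * ρL t := by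
      intro t ht hlt
      obtain ⟨ha1, htnn⟩ := hT2 t ht
      have ha2 : FLs - d * ε' / 2 < aF t := by
        have := abs_lt.1 ha1; linarith [this.1]
      have h2 : d * ρL t < d * Lε := mul_lt_mul_of_pos_left hlt hd
      have h3 : d * ε' / 2 ≤ aF t - d * ρL t := by linarith
      calc d * ε' / 2 * ρL T2 ≤ d * ε' / 2 * ρL t :=
            mul_le_mul_of_nonneg_left (hmono t ht) (by positivity)
        _ ≤ (aF t - d * ρL t) * ρL t :=
            mul_le_mul_of_nonneg_right h3 (hρLpos t htnn).le
    obtain ⟨t1, ht1, hge⟩ := reach_above (B := Lε) (c := d * ε' / 2 * ρL T2)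
      (by positivity) hρL'' hstep
    exact absurd hge (not_le.2 (hbelow t1 ht1))
  obtain ⟨t1, ht1T, ht1ge⟩ := claim2
  have hdown : ∀ t, t1 ≤ t → Lε ≤ ρL t := by
    refine barrier_down (fun t ht => hρL'' t (le_trans ht1T ht)) ht1ge ?_
    intro t ht hle
    have ht2 : T2 ≤ t := le_trans ht1T ht
    obtain ⟨ha1, htnn⟩ := hT2 t ht2
    have ha2 : FLs - d * ε' / 2 < aF t := by
      have := abs_lt.1 ha1; linarith [this.1]
    have h2 : d * ρL t ≤ d * Lε := mul_le_mul_of_nonneg_left hle hd.le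
    have h3 : 0 < aF t - d * ρL t := by linarith
    exact mul_pos h3 (hρLpos t htnn)
  refine ⟨max t0 t1, fun t ht => ?_⟩
  have h1 := hup t (le_trans (le_max_left _ _) ht)
  have h2 := hdown t (le_trans (le_max_right _ _) ht)
  rw [Real.dist_eq, abs_lt]
  constructor
  · rw [hLεdef] at h2; linarith
  · rw [hBεdef] at h1; linarith
end

section
/- Let d > 0, a > 0, ρ⁰ > 0, and let η : [0,∞) → ℝ be continuous with η(t) → 0 as t → ∞. Let ρ : [0,∞) → ℝ be differentiable with ρ(0) = ρ⁰ and ρ'(t) = (a + η(t) − d ρ(t)) ρ(t) for all t ≥ 0. Then ρ(t) → a/d as t → ∞. -/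
open Filter Topology

private lemma constAux {h : ℝ → ℝ} (hh : ∀ t, 0 ≤ t → HasDerivAt h 0 t) {t : ℝ} (ht : 0 ≤ t) :
    h t = h 0 :=
  constant_of_has_deriv_right_zero
    (fun x hx => (hh x hx.1).continuousAt.continuousWithinAt)
    (fun x hx => (hh x hx.1).hasDerivWithinAt) t ⟨ht, le_refl t⟩

private lemma expIntAux {c : ℝ} (hc : 0 < c) (T t : ℝ) :
    ∫ s in T..t, Real.exp (-(c * (t - s))) = (1 - Real.exp (-(c * (t - T)))) / c := by
  have key : ∀ s : ℝ, HasDerivAt (fun s => Real.exp (-(c * (t - s))) / c)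
      (Real.exp (-(c * (t - s)))) s := by
    intro s
    have h1 : HasDerivAt (fun s : ℝ => -(c * (t - s))) c s := by
      have : HasDerivAt (fun s : ℝ => t - s) (-1) s := (hasDerivAt_id s).const_sub t
      simpa using ((this.const_mul c).fun_neg)
    have h2 := (h1.exp).div_const c
    simpa [mul_div_assoc, div_self hc.ne'] using h2
  have hcont : Continuous fun s : ℝ => Real.exp (-(c * (t - s))) := by continuity
  rw [intervalIntegral.integral_eq_sub_of_hasDerivAt (fun s _ => key s)
    (hcont.intervalIntegrable T t)]
  simp [sub_div]

/-- Perturbed-logistic convergence lemma: if `ρ' = (a + η(t) − d ρ) ρ` with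
`a > 0`, `ρ(0) = ρ⁰ > 0` and `η(t) → 0` as `t → ∞`, then `ρ(t) → a/d`. -/
theorem stmt_10 (d a ρ0 : ℝ) (hd : 0 < d) (ha : 0 < a) (hρ0 : 0 < ρ0)
    (η : ℝ → ℝ) (hηc : Continuous η) (hη : Tendsto η atTop (nhds 0))
    (ρ : ℝ → ℝ) (hinit : ρ 0 = ρ0)
    (hode : ∀ t, 0 ≤ t → HasDerivAt ρ ((a + η t - d * ρ t) * ρ t) t) :
    Tendsto ρ atTop (nhds (a / d)) := by
  have hρcont : ∀ t, 0 ≤ t → ContinuousAt ρ t := fun t ht => (hode t ht).continuousAt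
  -- Step A: positivity of ρ on [0, ∞)
  set ρm : ℝ → ℝ := fun t => ρ (max t 0) with hρmdef
  have hρmc : Continuous ρm := by
    rw [continuous_iff_continuousAt]
    intro t
    have hmax : Continuous fun t : ℝ => max t 0 := continuous_id.max continuous_const
    exact ContinuousAt.comp (x := t) (f := fun x : ℝ => max x 0) (g := ρ)
      (hρcont (max t 0) (le_max_right _ _)) hmax.continuousAt
  set g : ℝ → ℝ := fun t => a + η t - d * ρm t with hgdef
  have hgc : Continuous g := by
    exact (continuous_const.add hηc).sub (continuous_const.mul hρmc)
  set G : ℝ → ℝ := fun t => ∫ s in (0:ℝ)..t, g s with hGdef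
  have hGd : ∀ t, HasDerivAt G (g t) t := fun t => (hgc.integral_hasStrictDerivAt 0 t).hasDerivAt
  have hgval : ∀ t, 0 ≤ t → g t = a + η t - d * ρ t := by
    intro t ht; simp [hgdef, hρmdef, max_eq_left ht]
  have hρeq : ∀ t, 0 ≤ t → ρ t = ρ0 * Real.exp (G t) := by
    have key : ∀ s, 0 ≤ s → HasDerivAt (fun t => ρ t * Real.exp (-G t)) 0 s := by
      intro s hs
      have h1 : HasDerivAt (fun t => Real.exp (-G t)) (-g s * Real.exp (-G s)) s := by
        simpa [mul_comm] using ((hGd s).neg).exp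
      have h2 := (hode s hs).fun_mul h1
      refine h2.congr_deriv ?_
      rw [hgval s hs]; ring
    intro t ht
    have h3 := constAux key ht
    have hG0 : G 0 = 0 := by simp [hGdef]
    rw [hG0, hinit] at h3
    simp only [neg_zero, Real.exp_zero, mul_one, Real.exp_neg] at h3
    rw [← h3, inv_mul_cancel_right₀ (Real.exp_ne_zero (G t))]
  have hpos : ∀ t, 0 ≤ t → 0 < ρ t := by
    intro t ht
    rw [hρeq t ht]
    positivity
  -- Step B: u = 1/ρ satisfies a linear ODE
  set u : ℝ → ℝ := fun t => (ρ t)⁻¹ with hudef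
  have hud : ∀ t, 0 ≤ t → HasDerivAt u (d - (a + η t) * u t) t := by
    intro t ht
    have hne : ρ t ≠ 0 := (hpos t ht).ne'
    have h1 := (hode t ht).fun_inv hne
    refine h1.congr_deriv ?_
    simp only [hudef]
    field_simp [hudef]
    ring
  set A : ℝ → ℝ := fun t => ∫ s in (0:ℝ)..t, (a + η s) with hAdef
  have hAc : Continuous fun s => a + η s := continuous_const.add hηc
  have hAd : ∀ t, HasDerivAt A (a + η t) t := fun t => (hAc.integral_hasStrictDerivAt 0 t).hasDerivAt
  have hAcont : Continuous A := by
    rw [continuous_iff_continuousAt]; exact fun t => (hAd t).continuousAt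
  set B : ℝ → ℝ := fun t => ∫ s in (0:ℝ)..t, Real.exp (A s) with hBdef
  have hBic : Continuous fun s => Real.exp (A s) := Real.continuous_exp.comp hAcont
  have hBd : ∀ t, HasDerivAt B (Real.exp (A t)) t :=
    fun t => (hBic.integral_hasStrictDerivAt 0 t).hasDerivAt
  -- explicit formula for u
  have hueq : ∀ t, 0 ≤ t → u t = (ρ0⁻¹ + d * B t) * Real.exp (-A t) := by
    have key : ∀ s, 0 ≤ s → HasDerivAt (fun t => u t * Real.exp (A t) - d * B t) 0 s := by
      intro s hs
      have h1 : HasDerivAt (fun t => Real.exp (A t)) ((a + η s) * Real.exp (A s)) s := by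
        simpa [mul_comm] using (hAd s).exp
      have h2 := ((hud s hs).fun_mul h1).fun_sub ((hBd s).const_mul d)
      refine h2.congr_deriv ?_
      ring
    intro t ht
    have h3 := constAux key ht
    have hA0 : A 0 = 0 := by simp [hAdef]
    have hB0 : B 0 = 0 := by simp [hBdef]
    have hu0 : u 0 = ρ0⁻¹ := by simp [hudef, hinit]
    rw [hA0, hB0, hu0] at h3
    simp at h3
    have h4 : u t * Real.exp (A t) = ρ0⁻¹ + d * B t := by linarith
    rw [← h4, Real.exp_neg]
    field_simp
  -- A t - A s = ∫ s..t (a + η)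
  have hAsub : ∀ s t : ℝ, A t - A s = ∫ r in s..t, (a + η r) := by
    intro s t
    simp only [hAdef]
    rw [intervalIntegral.integral_interval_sub_left (hAc.intervalIntegrable 0 t)
      (hAc.intervalIntegrable 0 s)]
  -- Step C: A → ∞
  have hAtop : Tendsto A atTop atTop := by
    have h1 : ∀ᶠ s in atTop, -(a/2) < η s :=
      hη.eventually (eventually_gt_nhds (by linarith))
    obtain ⟨T, hT⟩ := h1.exists_forall_of_atTop
    have h2 : ∀ t, T ≤ t → A T + (a/2) * (t - T) ≤ A t := by
      intro t htT
      have h3 : (∫ r in T..t, (a/2 : ℝ)) ≤ ∫ r in T..t, (a + η r) := by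
        apply intervalIntegral.integral_mono_on htT
          (continuous_const.intervalIntegrable T t) (hAc.intervalIntegrable T t)
        intro x hx
        have := hT x hx.1
        linarith
      rw [intervalIntegral.integral_const, smul_eq_mul] at h3
      have h4 := hAsub T t
      nlinarith
    apply tendsto_atTop_mono' atTop (eventually_atTop.2 ⟨T, h2⟩)
    apply tendsto_atTop_add_const_left
    exact (tendsto_atTop_add_const_right _ _ tendsto_id).const_mul_atTop (by linarith)
  have hexpA : Tendsto (fun t => Real.exp (-A t)) atTop (nhds 0) :=
    Real.tendsto_exp_atBot.comp (tendsto_neg_atTop_atBot.comp hAtop)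
  -- Step D: the key limit F t = exp(-A t) * B t → 1/a
  set F : ℝ → ℝ := fun t => Real.exp (-A t) * B t with hFdef
  -- core estimates for any ε ∈ (0, a)
  have hBsplit : ∀ T t : ℝ, B t = B T + ∫ s in T..t, Real.exp (A s) := by
    intro T t
    simp only [hBdef]
    have h1 := intervalIntegral.integral_interval_sub_left (μ := MeasureTheory.volume)
      (hBic.intervalIntegrable 0 t) (hBic.intervalIntegrable 0 T)
    linarith [h1]
  -- pointwise bounds on A t - A s for s,t beyond where |η| ≤ ε
  have hcore : ∀ ε : ℝ, 0 < ε → ε < a → ∀ T : ℝ, 0 ≤ T → (∀ s, T ≤ s → |η s| ≤ ε) →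
      ∀ t, T ≤ t →
      (1 - Real.exp (-((a + ε) * (t - T)))) / (a + ε) ≤ F t ∧
      F t ≤ Real.exp (-A t) * B T + 1 / (a - ε) := by
    intro ε hε hεa T hT0 hTη t hTt
    have haε : (0:ℝ) < a - ε := by linarith
    have haε' : (0:ℝ) < a + ε := by linarith
    have hbound : ∀ s, T ≤ s → s ≤ t →
        (a - ε) * (t - s) ≤ A t - A s ∧ A t - A s ≤ (a + ε) * (t - s) := by
      intro s hTs hst
      rw [hAsub s t]
      constructor
      · have h1 : (∫ r in s..t, (a - ε : ℝ)) ≤ ∫ r in s..t, (a + η r) := by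
          apply intervalIntegral.integral_mono_on hst (continuous_const.intervalIntegrable s t)
            (hAc.intervalIntegrable s t)
          intro x hx
          have h2 := hTη x (hTs.trans hx.1)
          have := abs_le.1 h2
          linarith [this.1]
        rw [intervalIntegral.integral_const, smul_eq_mul] at h1
        nlinarith
      · have h1 : (∫ r in s..t, (a + η r)) ≤ ∫ r in s..t, (a + ε : ℝ) := by
          apply intervalIntegral.integral_mono_on hst (hAc.intervalIntegrable s t)
            (continuous_const.intervalIntegrable s t)
          intro x hx
          have h2 := hTη x (hTs.trans hx.1)
          have := abs_le.1 h2
          linarith [this.2]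
        rw [intervalIntegral.integral_const, smul_eq_mul] at h1
        nlinarith
    have hBT : 0 ≤ B T := by
      simp only [hBdef]
      apply intervalIntegral.integral_nonneg hT0
      intro x _
      positivity
    have hItT : ∀ s, s ∈ Set.Icc T t →
        Real.exp (A t) * Real.exp (-((a + ε) * (t - s))) ≤ Real.exp (A s) := by
      intro s hs
      rw [← Real.exp_add]
      apply Real.exp_le_exp.2
      have := (hbound s hs.1 hs.2).2
      linarith
    have hItT' : ∀ s, s ∈ Set.Icc T t →
        Real.exp (A s) ≤ Real.exp (A t) * Real.exp (-((a - ε) * (t - s))) := by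
      intro s hs
      rw [← Real.exp_add]
      apply Real.exp_le_exp.2
      have := (hbound s hs.1 hs.2).1
      linarith
    have hcontgen : ∀ c : ℝ, Continuous fun s : ℝ => Real.exp (A t) * Real.exp (-(c * (t - s))) := by
      intro c
      exact continuous_const.mul (Real.continuous_exp.comp
        ((continuous_const.mul (continuous_const.sub continuous_id)).neg))
    have hcont1 := hcontgen (a + ε)
    have hcont2 := hcontgen (a - ε)
    have hint1 : Real.exp (A t) * ((1 - Real.exp (-((a + ε) * (t - T)))) / (a + ε)) ≤
        ∫ s in T..t, Real.exp (A s) := by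
      have h1 := intervalIntegral.integral_mono_on (μ := MeasureTheory.volume) hTt
        (hcont1.intervalIntegrable T t) (hBic.intervalIntegrable T t) hItT
      rw [intervalIntegral.integral_const_mul, expIntAux haε' T t] at h1
      exact h1
    have hint2 : (∫ s in T..t, Real.exp (A s)) ≤
        Real.exp (A t) * ((1 - Real.exp (-((a - ε) * (t - T)))) / (a - ε)) := by
      have h1 := intervalIntegral.integral_mono_on (μ := MeasureTheory.volume) hTt
        (hBic.intervalIntegrable T t) (hcont2.intervalIntegrable T t) hItT'
      rw [intervalIntegral.integral_const_mul, expIntAux haε T t] at h1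
      exact h1
    have hexppos : (0:ℝ) < Real.exp (-A t) := Real.exp_pos _
    have hee : Real.exp (-A t) * Real.exp (A t) = 1 := by
      rw [← Real.exp_add]; simp
    constructor
    · have h5 : Real.exp (-A t) * (Real.exp (A t) * ((1 - Real.exp (-((a + ε) * (t - T)))) / (a + ε)))
          ≤ Real.exp (-A t) * B t := by
        apply mul_le_mul_of_nonneg_left _ hexppos.le
        rw [hBsplit T t]
        linarith
      calc (1 - Real.exp (-((a + ε) * (t - T)))) / (a + ε)
          = Real.exp (-A t) * (Real.exp (A t) * ((1 - Real.exp (-((a + ε) * (t - T)))) / (a + ε))) := by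
            rw [← mul_assoc, hee, one_mul]
        _ ≤ F t := h5
    · have hle1 : (1 - Real.exp (-((a - ε) * (t - T)))) / (a - ε) ≤ 1 / (a - ε) := by
        rw [div_le_div_iff₀ haε haε]
        nlinarith [Real.exp_pos (-((a - ε) * (t - T)))]
      show Real.exp (-A t) * B t ≤ _
      calc Real.exp (-A t) * B t
          = Real.exp (-A t) * B T + Real.exp (-A t) * ∫ s in T..t, Real.exp (A s) := by
            rw [hBsplit T t]; ring
        _ ≤ Real.exp (-A t) * B T + Real.exp (-A t) *
            (Real.exp (A t) * ((1 - Real.exp (-((a - ε) * (t - T)))) / (a - ε))) := by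
            have h6 := mul_le_mul_of_nonneg_left hint2 hexppos.le
            linarith
        _ = Real.exp (-A t) * B T + (1 - Real.exp (-((a - ε) * (t - T)))) / (a - ε) := by
            rw [← mul_assoc, hee, one_mul]
        _ ≤ Real.exp (-A t) * B T + 1 / (a - ε) := by linarith
  -- threshold existence
  have hTgen : ∀ ε : ℝ, 0 < ε → ∃ T : ℝ, 0 ≤ T ∧ ∀ s, T ≤ s → |η s| ≤ ε := by
    intro ε hε
    have h1 : ∀ᶠ s in atTop, |η s| ≤ ε := by
      have h2 := (Metric.tendsto_nhds.1 hη) ε hε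
      filter_upwards [h2] with s hs
      rw [Real.dist_eq, sub_zero] at hs
      exact hs.le
    obtain ⟨T0, hT0⟩ := h1.exists_forall_of_atTop
    exact ⟨max T0 0, le_max_right _ _, fun s hs => hT0 s ((le_max_left _ _).trans hs)⟩
  -- decaying exponential limit
  have hdecay : ∀ c T : ℝ, 0 < c →
      Tendsto (fun t : ℝ => Real.exp (-(c * (t - T)))) atTop (nhds 0) := by
    intro c T hc
    apply Real.tendsto_exp_atBot.comp
    apply tendsto_neg_atTop_atBot.comp
    have h1 : Tendsto (fun t : ℝ => t - T) atTop atTop := tendsto_atTop_add_const_right _ (-T) tendsto_id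
    exact h1.const_mul_atTop hc
  -- the key limit
  have TF : Tendsto F atTop (nhds (1 / a)) := by
    rw [tendsto_order]
    constructor
    · intro c hc
      obtain ⟨ε, hε, hεa, hcε⟩ : ∃ ε : ℝ, 0 < ε ∧ ε < a ∧ c < 1 / (a + ε) := by
        rcases le_or_gt c 0 with h | h
        · exact ⟨a / 2, by linarith, by linarith, lt_of_le_of_lt h (by positivity)⟩
        · have h2 : c * a < 1 := (lt_div_iff₀ ha).1 hc
          have hca' : a < 1 / c := by
            rw [lt_div_iff₀ h]; nlinarith
          set ε := min (a / 2) ((1 / c - a) / 2) with hεdef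
          have hεle : ε ≤ (1 / c - a) / 2 := min_le_right _ _
          have hεpos : 0 < ε := lt_min (by linarith) (by linarith)
          refine ⟨ε, hεpos, (min_le_left _ _).trans_lt (by linarith), ?_⟩
          rw [lt_div_iff₀ (by linarith : (0:ℝ) < a + ε)]
          have h3 : a + ε < 1 / c := by linarith
          have h4 : c * (a + ε) < c * (1 / c) := mul_lt_mul_of_pos_left h3 h
          have h5 : c * (1 / c) = 1 := by field_simp
          linarith
      obtain ⟨T, hT0, hTη⟩ := hTgen ε hε
      have hlim : Tendsto (fun t : ℝ => (1 - Real.exp (-((a + ε) * (t - T)))) / (a + ε))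
          atTop (nhds (1 / (a + ε))) := by
        have h1 := ((hdecay (a + ε) T (by linarith)).const_sub 1).div_const (a + ε)
        simpa using h1
      filter_upwards [hlim.eventually (eventually_gt_nhds hcε), eventually_ge_atTop T]
        with t h1 h2
      have h3 := (hcore ε hε hεa T hT0 hTη t h2).1
      linarith
    · intro c hc
      obtain ⟨ε, hε, hεa, hcε⟩ : ∃ ε : ℝ, 0 < ε ∧ ε < a ∧ 1 / (a - ε) < c := by
        have hc0 : (0:ℝ) < c := lt_trans (by positivity) hc
        have h1c0 : (0:ℝ) < 1 / c := by positivity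
        have h2 : 1 < c * a := (div_lt_iff₀ ha).1 hc
        have hac : 1 / c < a := by
          rw [div_lt_iff₀ hc0]; nlinarith
        refine ⟨(a - 1 / c) / 2, by linarith, by linarith, ?_⟩
        have h4 : 1 / c < a - (a - 1 / c) / 2 := by linarith
        rw [div_lt_iff₀ (by linarith : (0:ℝ) < a - (a - 1 / c) / 2)]
        have h6 : c * (1 / c) < c * (a - (a - 1 / c) / 2) := mul_lt_mul_of_pos_left h4 hc0
        have h7 : c * (1 / c) = 1 := by field_simp
        linarith
      obtain ⟨T, hT0, hTη⟩ := hTgen ε hε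
      have hlim : Tendsto (fun t : ℝ => Real.exp (-A t) * B T + 1 / (a - ε))
          atTop (nhds (1 / (a - ε))) := by
        have h1 := (hexpA.mul_const (B T)).add_const (1 / (a - ε))
        simpa using h1
      filter_upwards [hlim.eventually (eventually_lt_nhds hcε), eventually_ge_atTop T]
        with t h1 h2
      have h3 := (hcore ε hε hεa T hT0 hTη t h2).2
      linarith
  -- conclude
  have hu_lim : Tendsto u atTop (nhds (d / a)) := by
    have h1 : Tendsto (fun t => ρ0⁻¹ * Real.exp (-A t) + d * F t) atTop
        (nhds (ρ0⁻¹ * 0 + d * (1 / a))) := (hexpA.const_mul _).add (TF.const_mul d)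
    have h2 : (fun t => ρ0⁻¹ * Real.exp (-A t) + d * F t) =ᶠ[atTop] u := by
      filter_upwards [eventually_ge_atTop (0:ℝ)] with t ht
      rw [hueq t ht, hFdef]
      ring
    have h3 : ρ0⁻¹ * 0 + d * (1 / a) = d / a := by ring
    rw [h3] at h1
    exact h1.congr' h2
  have hda : d / a ≠ 0 := by positivity
  have h4 : Tendsto (fun t => (u t)⁻¹) atTop (nhds (d / a)⁻¹) := hu_lim.inv₀ hda
  have h5 : (d / a)⁻¹ = a / d := by
    rw [inv_div]
  rw [h5] at h4
  apply h4.congr'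
  filter_upwards [eventually_ge_atTop (0:ℝ)] with t ht
  rw [hudef]
  simp
end

section
/- Let d > 0 and T > 0, and let Q : ℝ → ℝ be Lipschitz continuous and T-periodic with ∫₀ᵀ Q(t) dt > 0. Then the function w(t) := d⁻¹ exp(∫₀ᵗ Q(s) ds) / [ (∫₀ᵀ exp(∫₀ˢ Q(z) dz) ds) / (exp(∫₀ᵀ Q(s) ds) − 1) + ∫₀ᵗ exp(∫₀ˢ Q(z) dz) ds ] is well defined and strictly positive for all t, is T-periodic (w(t + T) = w(t) for all t), and satisfies w'(t) = (Q(t) − d w(t)) w(t) for all t. -/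
open Filter Topology

/-- Lemma 2, existence part: explicit strictly positive `T`-periodic solution
of the non-autonomous logistic ODE `w' = (Q(t) − d w) w`, where `Q` is
Lipschitz, `T`-periodic and has positive mean over one period. -/
theorem stmt_14 (d T : ℝ) (hd : 0 < d) (hT : 0 < T)
    (Q : ℝ → ℝ) (hlip : ∃ K : NNReal, LipschitzWith K Q)
    (hper : Function.Periodic Q T)
    (hmean : 0 < ∫ t in (0:ℝ)..T, Q t) :
    let w : ℝ → ℝ := fun t =>
      d⁻¹ * Real.exp (∫ s in (0:ℝ)..t, Q s) /
        ((∫ s in (0:ℝ)..T, Real.exp (∫ z in (0:ℝ)..s, Q z)) /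
            (Real.exp (∫ s in (0:ℝ)..T, Q s) - 1)
          + ∫ s in (0:ℝ)..t, Real.exp (∫ z in (0:ℝ)..s, Q z))
    (∀ t : ℝ, 0 < w t) ∧
    Function.Periodic w T ∧
    ∀ t : ℝ, HasDerivAt w ((Q t - d * w t) * w t) t := by
  intro w
  obtain ⟨K, hK⟩ := hlip
  have hQc : Continuous Q := hK.continuous
  set F : ℝ → ℝ := fun t => ∫ s in (0:ℝ)..t, Q s with hFdef
  set E : ℝ → ℝ := fun t => Real.exp (F t) with hEdef
  set G : ℝ → ℝ := fun t => ∫ s in (0:ℝ)..t, E s with hGdef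
  set C : ℝ := G T / (E T - 1) with hCdef
  have hw : ∀ t, w t = d⁻¹ * E t / (C + G t) := fun t => rfl
  have hQint : ∀ a b : ℝ, IntervalIntegrable Q MeasureTheory.volume a b :=
    fun a b => hQc.intervalIntegrable a b
  have hF : ∀ t, HasDerivAt F (Q t) t := fun t =>
    intervalIntegral.integral_hasDerivAt_right (hQint 0 t)
      (hQc.stronglyMeasurableAtFilter _ _) hQc.continuousAt
  have hFc : Continuous F := continuous_iff_continuousAt.2 fun t => (hF t).continuousAt
  have hEc : Continuous E := Real.continuous_exp.comp hFc
  have hE : ∀ t, HasDerivAt E (Q t * E t) t := fun t => by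
    simpa [hEdef, mul_comm] using (hF t).exp
  have hEint : ∀ a b : ℝ, IntervalIntegrable E MeasureTheory.volume a b :=
    fun a b => hEc.intervalIntegrable a b
  have hG : ∀ t, HasDerivAt G (E t) t := fun t =>
    intervalIntegral.integral_hasDerivAt_right (hEint 0 t)
      (hEc.stronglyMeasurableAtFilter _ _) hEc.continuousAt
  have hEpos : ∀ t, 0 < E t := fun t => Real.exp_pos _
  have hm1 : 1 < E T := by
    rw [hEdef, show (1:ℝ) = Real.exp 0 from (Real.exp_zero).symm]
    exact Real.exp_lt_exp.2 hmean
  have hGTpos : 0 < G T :=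
    intervalIntegral.intervalIntegral_pos_of_pos_on (hEint 0 T) (fun x _ => hEpos x) hT
  have hCpos : 0 < C := div_pos hGTpos (by linarith)
  have hFadd : ∀ t, F (t + T) = F T + F t := by
    intro t
    have h2 : (∫ s in T..(t+T), Q s) = ∫ s in (0:ℝ)..t, Q s := by
      have h3 := intervalIntegral.integral_comp_add_right (a := (0:ℝ)) (b := t) Q T
      simp only [zero_add] at h3
      rw [← h3]
      have hper' : ∀ x : ℝ, Q (x + T) = Q x := hper
      simp only [hper']
    calc F (t + T)
        = (∫ s in (0:ℝ)..T, Q s) + ∫ s in T..(t+T), Q s :=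
          (intervalIntegral.integral_add_adjacent_intervals (hQint 0 T) (hQint T (t+T))).symm
      _ = F T + F t := by rw [h2]
  have hEadd : ∀ t, E (t + T) = E T * E t := fun t => by
    rw [hEdef]; simp only [hFadd t, Real.exp_add]
  have hGadd : ∀ t, G (t + T) = G T + E T * G t := by
    intro t
    have h2 : (∫ s in (0:ℝ)..t, E (s + T)) = ∫ s in T..(t+T), E s := by
      simpa using intervalIntegral.integral_comp_add_right (a := 0) (b := t) E T
    calc G (t + T)
        = (∫ s in (0:ℝ)..T, E s) + ∫ s in T..(t+T), E s :=
          (intervalIntegral.integral_add_adjacent_intervals (hEint 0 T) (hEint T (t+T))).symm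
      _ = G T + ∫ s in (0:ℝ)..t, E (s + T) := by rw [h2]
      _ = G T + E T * G t := by
          simp only [hEadd, intervalIntegral.integral_const_mul]
          rfl
  have hCm : C + G T = E T * C := by
    have hne : E T - 1 ≠ 0 := by linarith
    rw [hCdef]; field_simp; ring
  clear hCdef
  clear_value C
  have hh : ∀ t, C + G (t + T) = E T * (C + G t) := by
    intro t; rw [hGadd t, ← add_assoc, hCm]; ring
  have key : ∀ n : ℕ, ∀ t, C + G (t + n * T) = (E T) ^ n * (C + G t) := by
    intro n
    induction n with
    | zero => simp
    | succ n ih =>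
      intro t
      have heq : t + ((n : ℝ) + 1) * T = (t + n * T) + T := by ring
      push_cast
      rw [heq, hh (t + n * T), ih t, pow_succ]
      ring
  have hhpos : ∀ t, 0 < C + G t := by
    intro t
    obtain ⟨n, hn⟩ := exists_nat_ge ((-t) / T)
    have htn : 0 ≤ t + n * T := by
      have := (div_le_iff₀ hT).1 hn; linarith
    have hGnn : 0 ≤ G (t + n * T) :=
      intervalIntegral.integral_nonneg htn (fun x _ => (hEpos x).le)
    have h1 : 0 < C + G (t + n * T) := by linarith
    have hp : 0 < (E T) ^ n := pow_pos (hEpos T) n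
    by_contra hcon
    push_neg at hcon
    have := key n t
    nlinarith [mul_nonpos_of_nonneg_of_nonpos hp.le hcon]
  have hwfun : w = fun t => d⁻¹ * E t / (C + G t) := funext hw
  refine ⟨?_, ?_, ?_⟩
  · intro t
    rw [hw t]
    exact div_pos (mul_pos (inv_pos.2 hd) (hEpos t)) (hhpos t)
  · intro t
    rw [hw, hw, hEadd, hh]
    rw [show d⁻¹ * (E T * E t) = E T * (d⁻¹ * E t) from by ring,
      mul_div_mul_left _ _ (ne_of_gt (hEpos T))]
  · intro t
    rw [hwfun]
    have hN : HasDerivAt (fun t => d⁻¹ * E t) (d⁻¹ * (Q t * E t)) t := (hE t).const_mul d⁻¹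
    have hD : HasDerivAt (fun t => C + G t) (E t) t := (hG t).const_add C
    have keyd : HasDerivAt (fun t => d⁻¹ * E t / (C + G t))
      ((d⁻¹ * (Q t * E t) * (C + G t) - d⁻¹ * E t * E t) / (C + G t) ^ 2) t := hN.div hD (ne_of_gt (hhpos t))
    convert keyd using 1
    beta_reduce
    field_simp [hd.ne', (hhpos t).ne']
end

section
/- Let d > 0 and T > 0, and let Q : ℝ → ℝ be continuous and T-periodic with ∫₀ᵀ Q(t) dt > 0. If w₁, w₂ : ℝ → ℝ are differentiable, T-periodic, strictly positive, and both satisfy w'(t) = (Q(t) − d w(t)) w(t) for all t, then w₁ = w₂. In particular, the positive T-periodic solution of this logistic ODE is unique. -/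
open Filter Topology

/-- Lemma 2, uniqueness part: the non-autonomous logistic ODE
`w' = (Q(t) − d w) w`, with `T`-periodic growth rate `Q` of positive mean, has
at most one strictly positive `T`-periodic solution. -/
theorem stmt_15 (d T : ℝ) (hd : 0 < d) (hT : 0 < T)
    (Q : ℝ → ℝ) (hQc : Continuous Q) (hper : Function.Periodic Q T)
    (hmean : 0 < ∫ t in (0:ℝ)..T, Q t)
    (w₁ w₂ : ℝ → ℝ)
    (hw₁per : Function.Periodic w₁ T) (hw₂per : Function.Periodic w₂ T)
    (hw₁pos : ∀ t : ℝ, 0 < w₁ t) (hw₂pos : ∀ t : ℝ, 0 < w₂ t)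
    (hw₁ : ∀ t : ℝ, HasDerivAt w₁ ((Q t - d * w₁ t) * w₁ t) t)
    (hw₂ : ∀ t : ℝ, HasDerivAt w₂ ((Q t - d * w₂ t) * w₂ t) t) :
    w₁ = w₂ := by
  set u : ℝ → ℝ := fun t => Real.log (w₁ t) - Real.log (w₂ t) with hu_def
  have hu : ∀ t, HasDerivAt u (-(d * (w₁ t - w₂ t))) t := by
    intro t
    have h1 : HasDerivAt (fun s => Real.log (w₁ s)) (Q t - d * w₁ t) t := by
      have := (hw₁ t).log (ne_of_gt (hw₁pos t))
      have hne : w₁ t ≠ 0 := ne_of_gt (hw₁pos t)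
      convert this using 1
      field_simp
    have h2 : HasDerivAt (fun s => Real.log (w₂ s)) (Q t - d * w₂ t) t := by
      have := (hw₂ t).log (ne_of_gt (hw₂pos t))
      have hne : w₂ t ≠ 0 := ne_of_gt (hw₂pos t)
      convert this using 1
      field_simp
    have := h1.sub h2
    exact this.congr_deriv (by ring)
  set f : ℝ → ℝ := fun t => (u t) ^ 2 with hf_def
  have hf : ∀ t, HasDerivAt f (2 * u t * (-(d * (w₁ t - w₂ t)))) t := by
    intro t
    have := (hu t).pow 2
    exact this.congr_deriv (by norm_num)
  -- sign fact: u t and w₁ t - w₂ t have the same sign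
  have hsign : ∀ t, 0 ≤ u t * (w₁ t - w₂ t) := by
    intro t
    rcases le_total (w₁ t) (w₂ t) with h | h
    · have hl : Real.log (w₁ t) ≤ Real.log (w₂ t) :=
        Real.log_le_log (hw₁pos t) h
      have : u t ≤ 0 := by simp [hu_def]; linarith
      nlinarith
    · have hl : Real.log (w₂ t) ≤ Real.log (w₁ t) :=
        Real.log_le_log (hw₂pos t) h
      have : 0 ≤ u t := by simp [hu_def]; linarith
      nlinarith
  have hanti : Antitone f := by
    apply antitone_of_deriv_nonpos
    · exact fun t => ((hf t).differentiableAt)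
    · intro t
      rw [(hf t).deriv]
      nlinarith [hsign t]
  have hfper : Function.Periodic f T := by
    intro t
    simp [hf_def, hu_def, hw₁per t, hw₂per t]
  have hconst : ∀ t, f t = f 0 := by
    intro t
    obtain ⟨n, hn⟩ := exists_nat_ge (|t| / T)
    have hnT : |t| ≤ n * T := by
      rw [div_le_iff₀ hT] at hn; linarith
    have h1 : f t ≤ f (-(n * T)) := hanti (by cases abs_le.mp hnT; linarith)
    have h2 : f (n * T) ≤ f t := hanti (by cases abs_le.mp hnT; linarith)
    have e1 : f (n * T) = f 0 := by
      have := hfper.nat_mul n 0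
      simpa using this
    have e2 : f (-(n * T)) = f 0 := by
      have := hfper.sub_nat_mul_eq (x := (0:ℝ)) n
      simpa using this
    linarith
  funext t
  have hfe : f = fun _ => f 0 := funext hconst
  have hder := (hf t).deriv
  rw [hfe] at hder
  simp at hder
  rcases hder with h | h | h
  · have hlog : Real.log (w₁ t) = Real.log (w₂ t) := by
      have h' : Real.log (w₁ t) - Real.log (w₂ t) = 0 := h
      linarith
    calc w₁ t = Real.exp (Real.log (w₁ t)) := (Real.exp_log (hw₁pos t)).symm
      _ = Real.exp (Real.log (w₂ t)) := by rw [hlog]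
      _ = w₂ t := Real.exp_log (hw₂pos t)
  · exact absurd h (ne_of_gt hd)
  · linarith
end

section
/- Let γ > 0, β > 0, T > 0, let φ : ℝ → ℝ be Lipschitz continuous and T-periodic, and let u : ℝ → ℝ be the differentiable T-periodic solution of u'(t) = 2√(γβ)(φ(t) − u(t)). Let v : [0,∞) → ℝ be continuous with v(t) > 0 for all t and such that there exist C ≥ 0 with |v(t) − √(γ/β)| ≤ C e^{−4√(γβ) t} for all t ≥ 0. If μ : [0,∞) → ℝ is differentiable with μ'(t) = (2γ/v(t))(φ(t) − μ(t)) for all t ≥ 0, then μ(t) − u(t) → 0 exponentially fast as t → ∞, i.e. there exist constants C' ≥ 0 and λ > 0 such that |μ(t) − u(t)| ≤ C' e^{−λ t} for all t ≥ 0. -/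
open Filter Topology

/-- Integral of a decaying exponential. -/
lemma aux_integral_exp_mul (k : ℝ) (hk : k ≠ 0) (t : ℝ) :
    ∫ s in (0:ℝ)..t, Real.exp (k*s) = (Real.exp (k*t) - 1)/k := by
  have hd : ∀ s : ℝ, HasDerivAt (fun x => Real.exp (k*x)/k) (Real.exp (k*s)) s := by
    intro s
    have h1 : HasDerivAt (fun x : ℝ => k*x) k s := by
      simpa using (hasDerivAt_id s).const_mul k
    have h2 := ((Real.hasDerivAt_exp (k*s)).comp s h1).div_const k
    refine h2.congr_deriv ?_
    field_simp
  rw [intervalIntegral.integral_eq_sub_of_hasDerivAt (fun s _ => hd s)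
    ((Real.continuous_exp.comp (continuous_const.mul continuous_id)).intervalIntegrable _ _)]
  simp [Real.exp_zero]
  ring

set_option maxHeartbeats 2000000 in
/-- Step 1 of the proof of Theorem 2: the mean phenotypic state `μ`, solving
`μ' = (2γ/v)(φ − μ)` with the inverse variance `v` converging exponentially to
`√(γ/β)`, converges exponentially to the `T`-periodic solution `u` of
`u' = 2√(γβ)(φ − u)`. -/
theorem stmt_17 (γ β T : ℝ) (hγ : 0 < γ) (hβ : 0 < β) (hT : 0 < T)
    (φ : ℝ → ℝ) (hφlip : ∃ K : NNReal, LipschitzWith K φ)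
    (hφper : Function.Periodic φ T)
    (u : ℝ → ℝ) (huper : Function.Periodic u T)
    (hu : ∀ t : ℝ, HasDerivAt u (2 * Real.sqrt (γ * β) * (φ t - u t)) t)
    (v : ℝ → ℝ) (hvc : Continuous v) (hvpos : ∀ t, 0 ≤ t → 0 < v t)
    (hvconv : ∃ C : ℝ, 0 ≤ C ∧ ∀ t, 0 ≤ t →
      |v t - Real.sqrt (γ / β)| ≤ C * Real.exp (-(4 * Real.sqrt (γ * β)) * t))
    (μ : ℝ → ℝ)
    (hμ : ∀ t, 0 ≤ t → HasDerivAt μ ((2 * γ / v t) * (φ t - μ t)) t) :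
    ∃ C' : ℝ, 0 ≤ C' ∧ ∃ lam : ℝ, 0 < lam ∧
      ∀ t, 0 ≤ t → |μ t - u t| ≤ C' * Real.exp (-lam * t) := by
  obtain ⟨K, hK⟩ := hφlip
  obtain ⟨C, hC0, hCb⟩ := hvconv
  have hφc : Continuous φ := hK.continuous
  have huc : Continuous u := continuous_iff_continuousAt.2 fun t => (hu t).continuousAt
  set s0 := Real.sqrt (γ/β) with hs0def
  have hs0 : 0 < s0 := Real.sqrt_pos.2 (div_pos hγ hβ)
  have hgb : 0 < Real.sqrt (γ*β) := Real.sqrt_pos.2 (mul_pos hγ hβ)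
  have hkey : s0 * Real.sqrt (γ*β) = γ := by
    rw [hs0def, ← Real.sqrt_mul (div_pos hγ hβ).le,
      show γ/β*(γ*β) = γ^2 by field_simp, Real.sqrt_sq hγ.le]
  set lam2 := 4 * Real.sqrt (γ*β) with hlam2def
  have hlam2 : 0 < lam2 := by positivity
  -- upper bound on v on [0,∞)
  have hvub : ∀ t, 0 ≤ t → v t ≤ s0 + C := by
    intro t ht
    have h1 := (abs_le.1 (hCb t ht)).2
    have h2 : Real.exp (-lam2*t) ≤ 1 := Real.exp_le_one_iff.2 (by nlinarith)
    nlinarith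
  -- lower bound on v on [0,∞)
  obtain ⟨t0, ht0⟩ : ∃ t0 : ℝ, ∀ t ≥ t0, C * Real.exp (-lam2*t) ≤ s0/2 := by
    have h1 : Tendsto (fun t : ℝ => C * Real.exp (-lam2*t)) atTop (𝓝 (C * 0)) := by
      have h2 : Tendsto (fun t : ℝ => lam2 * t) atTop atTop :=
        Tendsto.const_mul_atTop hlam2 tendsto_id
      have h5 : Tendsto (fun t : ℝ => Real.exp (-lam2*t)) atTop (𝓝 0) := by
        simpa [neg_mul] using h2
      exact h5.const_mul C
    rw [mul_zero] at h1
    have h3 := h1.eventually (eventually_le_nhds (by linarith : (0:ℝ) < s0/2))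
    exact eventually_atTop.1 h3
  set t1 := max t0 0 with ht1def
  obtain ⟨x, hx, hxmin⟩ := (isCompact_Icc (a := (0:ℝ)) (b := t1)).exists_isMinOn
    ⟨0, le_refl 0, le_max_right _ _⟩ hvc.continuousOn
  set m := min (v x) (s0/2) with hmdef
  have hm0 : 0 < m := lt_min (hvpos x hx.1) (by linarith)
  have hmv : ∀ t, 0 ≤ t → m ≤ v t := by
    intro t ht
    rcases le_total t t1 with hle | hle
    · exact le_trans (min_le_left _ _) (hxmin ⟨ht, hle⟩)
    · have h1 := (abs_le.1 (hCb t ht)).1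
      have h2 := ht0 t (le_trans (le_max_left _ _) hle)
      have := min_le_right (v x) (s0/2)
      linarith
  -- the coefficient a(t) = 2γ/v(max t 0)
  set a : ℝ → ℝ := fun t => 2*γ / v (max t 0) with hadef
  have hvmax : ∀ t : ℝ, 0 < v (max t 0) := fun t => hvpos _ (le_max_right _ _)
  have hac : Continuous a :=
    continuous_const.div (hvc.comp (continuous_id.max continuous_const))
      fun t => (hvmax t).ne'
  set c2 := 2 * Real.sqrt (γ*β) with hc2def
  have hc2' : c2 = 2*γ/s0 := by
    rw [hc2def, eq_div_iff hs0.ne']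
    nlinarith [hkey]
  set a0 := 2*γ/(s0 + C) with ha0def
  have ha0pos : 0 < a0 := by positivity
  have ha0le : ∀ t : ℝ, a0 ≤ a t := by
    intro t
    rw [ha0def]
    show 2*γ/(s0 + C) ≤ 2*γ / v (max t 0)
    exact div_le_div_of_nonneg_left (by positivity) (hvmax t) (hvub _ (le_max_right _ _))
  have ha0lt : a0 < lam2 := by
    have h1 : a0 ≤ 2*γ/s0 := by
      rw [ha0def]; gcongr; linarith
    rw [← hc2'] at h1
    have : c2 < lam2 := by rw [hc2def, hlam2def]; nlinarith
    linarith
  set C1 := 2*γ*C/(m*s0) with hC1def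
  have hC1nn : 0 ≤ C1 := by positivity
  have haest : ∀ t, 0 ≤ t → |a t - c2| ≤ C1 * Real.exp (-lam2 * t) := by
    intro t ht
    have hvt := hvpos t ht
    have hval : a t = 2*γ/v t := by rw [hadef]; simp [max_eq_left ht]
    have heq : a t - c2 = 2*γ*(s0 - v t)/(v t * s0) := by
      rw [hval, hc2']
      field_simp
    rw [heq, abs_div]
    rw [abs_of_pos (mul_pos hvt hs0)]
    rw [div_le_iff₀ (mul_pos hvt hs0)]
    have h1 : |2*γ*(s0 - v t)| = 2*γ*|v t - s0| := by
      rw [abs_mul, abs_of_pos (by linarith : (0:ℝ) < 2*γ), abs_sub_comm]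
    rw [h1]
    have h2 : |v t - s0| ≤ C * Real.exp (-lam2*t) := hCb t ht
    have h3 : m * s0 ≤ v t * s0 := by
      have := hmv t ht; nlinarith
    calc 2*γ*|v t - s0| ≤ 2*γ*(C * Real.exp (-lam2*t)) := by nlinarith
      _ = C1 * Real.exp (-lam2*t) * (m*s0) := by
          rw [hC1def]
          field_simp
      _ ≤ C1 * Real.exp (-lam2 * t) * (v t * s0) :=
          mul_le_mul_of_nonneg_left h3 (by positivity)
  clear_value a
  -- the integrating factor A(t) = ∫₀ᵗ a
  set A : ℝ → ℝ := fun t => ∫ s in (0:ℝ)..t, a s with hAdef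
  have hAderiv : ∀ t : ℝ, HasDerivAt A (a t) t := fun t =>
    intervalIntegral.integral_hasDerivAt_right (hac.intervalIntegrable _ _)
      hac.aestronglyMeasurable.stronglyMeasurableAtFilter hac.continuousAt
  have hA0 : A 0 = 0 := intervalIntegral.integral_same
  have hAc : Continuous A := continuous_iff_continuousAt.2 fun t => (hAderiv t).continuousAt
  have hAsub : ∀ s t : ℝ, s ≤ t → a0*(t-s) ≤ A t - A s := by
    intro s t hst
    have hdecomp : A s + ∫ x in s..t, a x = A t :=
      intervalIntegral.integral_add_adjacent_intervals (hac.intervalIntegrable _ _)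
        (hac.intervalIntegrable _ _)
    have h1 : ∫ _x in s..t, (a0 : ℝ) ≤ ∫ x in s..t, a x :=
      intervalIntegral.integral_mono_on hst intervalIntegrable_const
        (hac.intervalIntegrable _ _) (fun x _ => ha0le x)
    rw [intervalIntegral.integral_const, smul_eq_mul] at h1
    nlinarith [h1, hdecomp]
  clear_value A
  set g : ℝ → ℝ := fun s => Real.exp (A s) * ((a s - c2) * (φ s - u s)) with hgdef
  have hgc : Continuous g :=
    (Real.continuous_exp.comp hAc).mul ((hac.sub continuous_const).mul (hφc.sub huc))
  set h : ℝ → ℝ := fun t => Real.exp (A t) * (μ t - u t) with hhdef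
  have hhderiv : ∀ s, 0 ≤ s → HasDerivAt h (g s) s := by
    intro s hs
    have h1 : HasDerivAt (fun t => Real.exp (A t)) (Real.exp (A s) * a s) s :=
      (Real.hasDerivAt_exp (A s)).comp s (hAderiv s)
    have h2 : HasDerivAt (fun t => μ t - u t)
        ((2*γ/v s)*(φ s - μ s) - c2*(φ s - u s)) s := (hμ s hs).sub (hu s)
    have h3 := h1.mul h2
    have has : a s = 2*γ / v s := by rw [hadef]; simp [max_eq_left hs]
    refine HasDerivAt.congr_deriv h3 ?_
    rw [hgdef]
    simp only []
    rw [has]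
    ring
  have hFTC : ∀ t, 0 ≤ t → h t = h 0 + ∫ s in (0:ℝ)..t, g s := by
    intro t ht
    have heq := intervalIntegral.integral_eq_sub_of_hasDerivAt
      (f := h) (f' := g) (a := 0) (b := t)
      (fun s hs => hhderiv s (by rw [Set.uIcc_of_le ht] at hs; exact hs.1))
      (hgc.intervalIntegrable _ _)
    linarith [heq]
  clear_value g h
  -- bound on |φ - u| by periodicity
  have hψper : Function.Periodic (fun t => |φ t - u t|) T := by
    intro t; simp only []; rw [hφper t, huper t]
  obtain ⟨x2, hx2, hmax2⟩ := (isCompact_Icc (a := (0:ℝ)) (b := T)).exists_isMaxOn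
    ⟨0, le_refl 0, hT.le⟩ ((hφc.sub huc).abs.continuousOn)
  set M := |φ x2 - u x2| with hMdef
  have hM0 : 0 ≤ M := abs_nonneg _
  have hMb : ∀ t : ℝ, |φ t - u t| ≤ M := by
    intro t
    obtain ⟨y, hy, hyeq⟩ := hψper.exists_mem_Ico₀ hT t
    calc |φ t - u t| = |φ y - u y| := hyeq
      _ ≤ M := hmax2 ⟨hy.1, hy.2.le⟩
  -- final constants
  set L := lam2 - a0 with hLdef
  have hLpos : 0 < L := by rw [hLdef]; linarith
  set B := M * C1 with hBdef
  have hB0 : 0 ≤ B := mul_nonneg hM0 hC1nn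
  refine ⟨|μ 0 - u 0| + B/L, add_nonneg (abs_nonneg _) (div_nonneg hB0 hLpos.le),
    a0, ha0pos, ?_⟩
  intro t ht
  have hEpos : 0 < Real.exp (A t) := Real.exp_pos _
  have hAt : a0 * t ≤ A t := by have := hAsub 0 t ht; rw [hA0] at this; linarith
  -- pointwise bound on |g|
  have hgbound : ∀ s, s ∈ Set.Icc (0:ℝ) t →
      |g s| ≤ (Real.exp (A t) * (B * Real.exp (-a0*t))) * Real.exp ((a0-lam2)*s) := by
    intro s hs
    have hs0' := hs.1
    have hst := hs.2
    have h1 : |g s| ≤ Real.exp (A s) * (C1 * Real.exp (-lam2*s) * M) := by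
      rw [hgdef]
      simp only []
      rw [abs_mul, Real.abs_exp, abs_mul]
      refine mul_le_mul_of_nonneg_left ?_ (Real.exp_pos _).le
      exact mul_le_mul (haest s hs0') (hMb s) (abs_nonneg _) (by positivity)
    have h2 : Real.exp (A s) ≤ Real.exp (A t) * (Real.exp (-a0*t) * Real.exp (a0*s)) := by
      rw [← Real.exp_add, ← Real.exp_add]
      refine Real.exp_le_exp.2 ?_
      have := hAsub s t hst
      linarith
    calc |g s| ≤ Real.exp (A s) * (C1 * Real.exp (-lam2*s) * M) := h1
      _ ≤ (Real.exp (A t) * (Real.exp (-a0*t) * Real.exp (a0*s)))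
            * (C1 * Real.exp (-lam2*s) * M) :=
          mul_le_mul_of_nonneg_right h2 (by positivity)
      _ = (Real.exp (A t) * (B * Real.exp (-a0*t)))
            * (Real.exp (a0*s) * Real.exp (-lam2*s)) := by rw [hBdef]; ring
      _ = (Real.exp (A t) * (B * Real.exp (-a0*t))) * Real.exp ((a0-lam2)*s) := by
          rw [← Real.exp_add]
          ring_nf
  have hint1 : (∫ s in (0:ℝ)..t, |g s|)
      ≤ ∫ s in (0:ℝ)..t, (Real.exp (A t) * (B * Real.exp (-a0*t))) * Real.exp ((a0-lam2)*s) :=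
    intervalIntegral.integral_mono_on ht (hgc.abs.intervalIntegrable _ _)
      ((continuous_const.mul (Real.continuous_exp.comp
        (continuous_const.mul continuous_id))).intervalIntegrable _ _) hgbound
  have hint2 : (∫ s in (0:ℝ)..t, (Real.exp (A t) * (B * Real.exp (-a0*t))) * Real.exp ((a0-lam2)*s))
      = (Real.exp (A t) * (B * Real.exp (-a0*t))) * ((Real.exp ((a0-lam2)*t) - 1)/(a0-lam2)) := by
    rw [intervalIntegral.integral_const_mul, aux_integral_exp_mul _ (by linarith) t]
  have hq : (Real.exp ((a0-lam2)*t) - 1)/(a0-lam2) ≤ 1/L := by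
    have hE1 : 0 < Real.exp ((a0-lam2)*t) := Real.exp_pos _
    have heq2 : (Real.exp ((a0-lam2)*t) - 1)/(a0-lam2)
        = (1 - Real.exp ((a0-lam2)*t))/L := by
      rw [show a0 - lam2 = -L by rw [hLdef]; ring, div_neg, ← neg_div, neg_sub]
    rw [heq2, div_le_div_iff₀ hLpos hLpos]
    nlinarith
  have hmain : Real.exp (A t) * |μ t - u t|
      ≤ |μ 0 - u 0| + (Real.exp (A t) * (B * Real.exp (-a0*t))) * (1/L) := by
    have hh0 : h 0 = μ 0 - u 0 := by rw [hhdef]; simp [hA0]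
    have habs : |∫ s in (0:ℝ)..t, g s| ≤ ∫ s in (0:ℝ)..t, |g s| := by
      simpa [Real.norm_eq_abs] using
        intervalIntegral.norm_integral_le_integral_norm (f := g) (a := 0) (b := t) (μ := MeasureTheory.volume) ht
    calc Real.exp (A t) * |μ t - u t| = |h t| := by
          rw [hhdef]; simp only []; rw [abs_mul, Real.abs_exp]
      _ = |h 0 + ∫ s in (0:ℝ)..t, g s| := by rw [hFTC t ht]
      _ ≤ |h 0| + |∫ s in (0:ℝ)..t, g s| := abs_add_le _ _
      _ ≤ |μ 0 - u 0| + ∫ s in (0:ℝ)..t, |g s| := by rw [hh0]; linarith [habs]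
      _ ≤ |μ 0 - u 0| + (Real.exp (A t) * (B * Real.exp (-a0*t)))
            * ((Real.exp ((a0-lam2)*t) - 1)/(a0-lam2)) := by
          rw [← hint2]; linarith [hint1]
      _ ≤ _ := add_le_add_right (mul_le_mul_of_nonneg_left hq (by positivity)) _
  have hge1 : 1 ≤ Real.exp (-a0*t) * Real.exp (A t) := by
    rw [← Real.exp_add]
    exact Real.one_le_exp (by linarith)
  have hfirst : |μ 0 - u 0| ≤ |μ 0 - u 0| * (Real.exp (-a0*t) * Real.exp (A t)) :=
    le_mul_of_one_le_right (abs_nonneg _) hge1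
  rw [← mul_le_mul_iff_right₀ hEpos]
  have hd : Real.exp (A t) * (B * Real.exp (-a0*t)) * (1/L)
      = Real.exp (A t) * (B/L) * Real.exp (-a0*t) := by ring
  have hg2 : Real.exp (A t) * ((|μ 0 - u 0| + B/L) * Real.exp (-a0*t))
      = |μ 0 - u 0| * (Real.exp (-a0*t) * Real.exp (A t))
        + Real.exp (A t) * (B/L) * Real.exp (-a0*t) := by ring
  linarith [hmain, hfirst, hd, hg2]
end
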